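/- arXiv:math/0311334 — 14 statements merged into one kernel-verified Lean document; each statement's English description precedes it below -/
import Mathlib

section
/- An (n+1)-tuple (r_1,...,r_{n+1}) of nonnegative integers is the bracket vector of a triangulation of an (n+3)-gon (i.e., r_i = i - 1 - v_i where v_i is the least vertex connected to vertex i) if and only if: (i) for all 1 ≤ i < j ≤ n+1, if r_j - (j-i) ≥ 0 then r_i ≤ r_j - (j-i), and (ii) 0 ≤ r_i ≤ i-1 for all i. -/
/-- A triangulation of a convex `(n+3)`-gon with vertices `0, 1, …, n+2`
(labelled clockwise): a maximal collection of pairwise noncrossing diagonals.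
Each diagonal is recorded as a pair `(a, b)` with `a < b`. -/
structure TriA (n : ℕ) where
  /-- The diagonals of the triangulation. -/
  diags : Finset (Fin (n + 3) × Fin (n + 3))
  lt : ∀ p ∈ diags, p.1 < p.2
  /-- Each chord is a diagonal: its endpoints are not adjacent on the polygon
  (in particular it is not the edge connecting `0` and `n+2`). -/
  isDiag : ∀ p ∈ diags, (p.1 : ℕ) + 1 < (p.2 : ℕ) ∧ ¬((p.1 : ℕ) = 0 ∧ (p.2 : ℕ) = n + 2)
  /-- No two diagonals cross in the interior. -/
  noncross : ∀ p ∈ diags, ∀ q ∈ diags, ¬(p.1 < q.1 ∧ q.1 < p.2 ∧ p.2 < q.2)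
  /-- Maximality: any diagonal crossing no diagonal of the collection belongs
  to it. -/
  maximal : ∀ c : Fin (n + 3) × Fin (n + 3), c.1 < c.2 →
    ((c.1 : ℕ) + 1 < (c.2 : ℕ) ∧ ¬((c.1 : ℕ) = 0 ∧ (c.2 : ℕ) = n + 2)) →
    (∀ q ∈ diags, ¬(c.1 < q.1 ∧ q.1 < c.2 ∧ c.2 < q.2) ∧
      ¬(q.1 < c.1 ∧ c.1 < q.2 ∧ q.2 < c.2)) →
    c ∈ diags

/-- The vertex `i = k + 1` of the polygon, for `k` a 0-based bracket index. -/
def vtxA (n : ℕ) (k : Fin (n + 1)) : Fin (n + 3) :=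
  ⟨(k : ℕ) + 1, by have := k.isLt; omega⟩

/-- The bracket vector of a triangulation: `r_i = i - 1 - v_i`, where `v_i` is
the least vertex connected to vertex `i` by a diagonal or an edge of the
polygon (the edges contribute the neighbour `i - 1`).  Indices are 0-based:
the coordinate `k` corresponds to the vertex `i = k + 1`. -/
def brA (n : ℕ) (T : TriA n) (k : Fin (n + 1)) : ℕ :=
  (k : ℕ) -
    ((insert (⟨(k : ℕ), by have := k.isLt; omega⟩ : Fin (n + 3))
        ((T.diags.filter fun p => p.2 = vtxA n k).image Prod.fst)).min'
      (Finset.insert_nonempty _ _) : Fin (n + 3)).val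

/-- Condition (i) for type `A_n` bracket vectors (0-based indices). -/
def condIA (n : ℕ) (r : Fin (n + 1) → ℕ) : Prop :=
  ∀ i j : Fin (n + 1), i < j → (j : ℕ) - (i : ℕ) ≤ r j →
    r i + ((j : ℕ) - (i : ℕ)) ≤ r j

/- ===== auxiliary development ===== -/

lemma brA_spec (n : ℕ) (T : TriA n) (k : Fin (n + 1)) :
    ∃ v : ℕ, v ≤ (k : ℕ) ∧ brA n T k = (k : ℕ) - v ∧
      (v = (k : ℕ) ∨ ∃ p ∈ T.diags, (p.1 : ℕ) = v ∧ p.2 = vtxA n k) ∧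
      ∀ p ∈ T.diags, p.2 = vtxA n k → v ≤ (p.1 : ℕ) := by
  set M : Finset (Fin (n + 3)) :=
    insert (⟨(k : ℕ), by have := k.isLt; omega⟩ : Fin (n + 3))
      ((T.diags.filter fun p => p.2 = vtxA n k).image Prod.fst) with hM
  have hne : M.Nonempty := Finset.insert_nonempty _ _
  refine ⟨((M.min' hne : Fin (n + 3)) : ℕ), ?_, ?_, ?_, ?_⟩
  · exact Fin.le_def.1 (Finset.min'_le M _ (Finset.mem_insert_self _ _))
  · rfl
  · have hmem : M.min' hne ∈ insert (⟨(k : ℕ), by have := k.isLt; omega⟩ : Fin (n + 3))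
        ((T.diags.filter fun p => p.2 = vtxA n k).image Prod.fst) := M.min'_mem hne
    rcases Finset.mem_insert.1 hmem with h | h
    · left; exact congrArg Fin.val h
    · right
      obtain ⟨p, hp, hp1⟩ := Finset.mem_image.1 h
      obtain ⟨hpd, hp2⟩ := Finset.mem_filter.1 hp
      exact ⟨p, hpd, congrArg Fin.val hp1, hp2⟩
  · intro p hp hp2
    refine Fin.le_def.1 (Finset.min'_le M _ ?_)
    exact Finset.mem_insert_of_mem
      (Finset.mem_image_of_mem _ (Finset.mem_filter.2 ⟨hp, hp2⟩))

open scoped Classical in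
noncomputable def goodSet (n : ℕ) (V : ℕ → ℕ) : Finset (Fin (n + 3) × Fin (n + 3)) :=
  Finset.univ.filter fun p =>
    (p.1 : ℕ) + 1 < (p.2 : ℕ) ∧ ¬((p.1 : ℕ) = 0 ∧ (p.2 : ℕ) = n + 2) ∧
      V (p.2 : ℕ) ≤ (p.1 : ℕ) ∧
      ∀ c : ℕ, (p.1 : ℕ) < c → c < (p.2 : ℕ) → (p.1 : ℕ) ≤ V c

lemma mem_goodSet {n : ℕ} {V : ℕ → ℕ} {p : Fin (n + 3) × Fin (n + 3)} :
    p ∈ goodSet n V ↔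
      (p.1 : ℕ) + 1 < (p.2 : ℕ) ∧ ¬((p.1 : ℕ) = 0 ∧ (p.2 : ℕ) = n + 2) ∧
      V (p.2 : ℕ) ≤ (p.1 : ℕ) ∧
      ∀ c : ℕ, (p.1 : ℕ) < c → c < (p.2 : ℕ) → (p.1 : ℕ) ≤ V c := by
  simp [goodSet]

section Construction

variable {n : ℕ} {V : ℕ → ℕ}

lemma claim1 (hVlt : ∀ m, 1 ≤ m → m ≤ n + 1 → V m < m)
    (hVint : ∀ m c, 1 ≤ m → m ≤ n + 1 → V m < c → c < m → V m ≤ V c)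
    {m : ℕ} (h1 : 1 ≤ m) (h2 : m ≤ n + 1) (h3 : V m + 1 < m) :
    ((⟨V m, by have := hVlt m h1 h2; omega⟩ : Fin (n + 3)),
      (⟨m, by omega⟩ : Fin (n + 3))) ∈ goodSet n V := by
  rw [mem_goodSet]
  refine ⟨h3, ?_, le_refl _, fun c hc1 hc2 => hVint m c h1 h2 hc1 hc2⟩
  show ¬(V m = 0 ∧ m = n + 2)
  omega

lemma goodSet_maximal (hVlt : ∀ m, 1 ≤ m → m ≤ n + 1 → V m < m)
    (hVint : ∀ m c, 1 ≤ m → m ≤ n + 1 → V m < c → c < m → V m ≤ V c)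
    (hVtop : V (n + 2) = 0) :
    ∀ c : Fin (n + 3) × Fin (n + 3), c.1 < c.2 →
    ((c.1 : ℕ) + 1 < (c.2 : ℕ) ∧ ¬((c.1 : ℕ) = 0 ∧ (c.2 : ℕ) = n + 2)) →
    (∀ q ∈ goodSet n V, ¬(c.1 < q.1 ∧ q.1 < c.2 ∧ c.2 < q.2) ∧
      ¬(q.1 < c.1 ∧ c.1 < q.2 ∧ q.2 < c.2)) →
    c ∈ goodSet n V := by
  intro c _ hdiag hcomp
  set a : ℕ := (c.1 : ℕ) with ha
  set b : ℕ := (c.2 : ℕ) with hb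
  have hbn : b ≤ n + 2 := by have := c.2.isLt; omega
  have hab : a + 1 < b := hdiag.1
  have partA : ∀ t : ℕ, a < t → t < b → a ≤ V t := by
    intro t ht1 ht2
    by_contra hVt
    push_neg at hVt
    have hmem := claim1 hVlt hVint (m := t) (by omega) (by omega) (by omega)
    exact (hcomp _ hmem).2 ⟨Fin.lt_def.2 (show V t < a by omega),
      Fin.lt_def.2 (show a < t from ht1), Fin.lt_def.2 (show t < b from ht2)⟩
  rw [mem_goodSet]
  refine ⟨hdiag.1, hdiag.2, ?_, partA⟩
  show V b ≤ a
  rcases eq_or_lt_of_le hbn with hb2 | hb2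
  · rw [hb2, hVtop]; omega
  have hbn1 : b ≤ n + 1 := by omega
  by_contra hVb
  push_neg at hVb
  have hPex : ∃ t, b < t ∧ V t ≤ a := ⟨n + 2, by omega, by rw [hVtop]; omega⟩
  set q := Nat.find hPex with hqdef
  obtain ⟨hq1, hq2⟩ : b < q ∧ V q ≤ a := Nat.find_spec hPex
  have hqn : q ≤ n + 2 := Nat.find_min' hPex ⟨by omega, by rw [hVtop]; omega⟩
  have hqmin : ∀ m, b < m → m < q → a < V m := by
    intro m hm1 hm2
    have h := Nat.find_min hPex hm2
    push_neg at h
    exact h hm1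
  have hIne : ((Finset.Ico b q).image V).Nonempty :=
    Finset.Nonempty.image ⟨b, Finset.mem_Ico.2 ⟨le_refl _, hq1⟩⟩ V
  set p := ((Finset.Ico b q).image V).min' hIne with hpdef
  obtain ⟨m0, hm0mem, hm0⟩ := Finset.mem_image.1 (Finset.min'_mem _ hIne)
  rw [← hpdef] at hm0
  obtain ⟨hm01, hm02⟩ := Finset.mem_Ico.1 hm0mem
  have hple : ∀ m, b ≤ m → m < q → p ≤ V m := fun m h1 h2 => by
    rw [hpdef]
    exact Finset.min'_le _ _ (Finset.mem_image_of_mem V (Finset.mem_Ico.2 ⟨h1, h2⟩))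
  have hap : a < p := by
    rcases eq_or_lt_of_le hm01 with h | h
    · rw [← hm0, ← h]; exact hVb
    · rw [← hm0]; exact hqmin m0 h hm02
  have hpb : p < b := lt_of_le_of_lt (hple b le_rfl hq1) (hVlt b (by omega) hbn1)
  have hdmem : ((⟨p, by omega⟩ : Fin (n + 3)), (⟨q, by omega⟩ : Fin (n + 3))) ∈
      goodSet n V := by
    rw [mem_goodSet]
    refine ⟨show p + 1 < q by omega, show ¬(p = 0 ∧ q = n + 2) by omega,
      show V q ≤ p by omega, ?_⟩
    intro t ht1 ht2
    show p ≤ V t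
    replace ht1 : p < t := ht1
    replace ht2 : t < q := ht2
    rcases le_or_gt b t with h | h
    · exact hple t h ht2
    · have : V m0 ≤ V t := hVint m0 t (by omega) (by omega) (by omega) (by omega)
      omega
  exact (hcomp _ hdmem).1 ⟨Fin.lt_def.2 (show a < p from hap),
    Fin.lt_def.2 (show p < b from hpb), Fin.lt_def.2 (show b < q from hq1)⟩

noncomputable def goodTri (hVlt : ∀ m, 1 ≤ m → m ≤ n + 1 → V m < m)
    (hVint : ∀ m c, 1 ≤ m → m ≤ n + 1 → V m < c → c < m → V m ≤ V c)
    (hVtop : V (n + 2) = 0) : TriA n where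
  diags := goodSet n V
  lt := by
    intro p hp
    have := (mem_goodSet.1 hp).1
    rw [Fin.lt_def]; omega
  isDiag := fun p hp => ⟨(mem_goodSet.1 hp).1, (mem_goodSet.1 hp).2.1⟩
  noncross := by
    intro p hp q hq
    rintro ⟨h1, h2, h3⟩
    rw [Fin.lt_def] at h1 h2 h3
    have hp' := mem_goodSet.1 hp
    have hq' := mem_goodSet.1 hq
    have e1 : (q.1 : ℕ) ≤ V (p.2 : ℕ) := hq'.2.2.2 _ h2 h3
    have e2 : V (p.2 : ℕ) ≤ (p.1 : ℕ) := hp'.2.2.1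
    omega
  maximal := goodSet_maximal hVlt hVint hVtop

end Construction

def Vr (n : ℕ) (r : Fin (n + 1) → ℕ) (c : ℕ) : ℕ :=
  if h : 1 ≤ c ∧ c ≤ n + 1 then c - 1 - r ⟨c - 1, by omega⟩ else 0

lemma Vr_eq (n : ℕ) (r : Fin (n + 1) → ℕ) {c : ℕ} (h1 : 1 ≤ c) (h2 : c ≤ n + 1) :
    Vr n r c = c - 1 - r ⟨c - 1, by omega⟩ := dif_pos ⟨h1, h2⟩

lemma Vr_top (n : ℕ) (r : Fin (n + 1) → ℕ) : Vr n r (n + 2) = 0 :=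
  dif_neg (by omega)

lemma Vr_val (n : ℕ) (r : Fin (n + 1) → ℕ) (k : Fin (n + 1)) :
    Vr n r ((k : ℕ) + 1) = (k : ℕ) - r k := by
  have hk := k.isLt
  rw [Vr_eq n r (by omega) (by omega)]
  simp only [Nat.add_sub_cancel, Fin.eta]

/-- An `(n+1)`-tuple of nonnegative integers is the bracket vector of a
triangulation of an `(n+3)`-gon iff it satisfies (i) `r_i ≤ r_j - (j-i)`
whenever `i < j` and `r_j - (j-i) ≥ 0`, and (ii) `0 ≤ r_i ≤ i - 1`. -/
theorem bracket_vector_characterization_A (n : ℕ) (r : Fin (n + 1) → ℕ) :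
    (∃ T : TriA n, ∀ k : Fin (n + 1), r k = brA n T k) ↔
      (condIA n r ∧ ∀ k : Fin (n + 1), r k ≤ (k : ℕ)) := by
  constructor
  · rintro ⟨T, hT⟩
    constructor
    · intro i j hij hle
      rw [Fin.lt_def] at hij
      obtain ⟨vi, hvi1, hvi2, hvi3, hvi4⟩ := brA_spec n T i
      obtain ⟨vj, hvj1, hvj2, hvj3, hvj4⟩ := brA_spec n T j
      rw [hT j, hvj2] at hle
      rw [hT i, hT j, hvi2, hvj2]
      have hvji : vj ≤ (i : ℕ) := by omega
      obtain ⟨d, hd, hd1, hd2⟩ : ∃ p ∈ T.diags, (p.1 : ℕ) = vj ∧ p.2 = vtxA n j := by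
        rcases hvj3 with h | h
        · omega
        · exact h
      have key : vj ≤ vi := by
        rcases hvi3 with h | h
        · omega
        · obtain ⟨e, he, he1, he2⟩ := h
          by_contra hlt
          push_neg at hlt
          refine T.noncross e he d hd ⟨?_, ?_, ?_⟩ <;> rw [Fin.lt_def]
          · omega
          · rw [he2]; show (d.1 : ℕ) < (i : ℕ) + 1; omega
          · rw [he2, hd2]; show (i : ℕ) + 1 < (j : ℕ) + 1; omega
      omega
    · intro k
      obtain ⟨v, hv1, hv2, _, _⟩ := brA_spec n T k
      rw [hT k, hv2]; omega
  · rintro ⟨hr1, hr2⟩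
    set V : ℕ → ℕ := Vr n r with hVdef
    have hVval : ∀ k : Fin (n + 1), V ((k : ℕ) + 1) = (k : ℕ) - r k := Vr_val n r
    have hVlt : ∀ m, 1 ≤ m → m ≤ n + 1 → V m < m := by
      intro m h1 h2
      rw [hVdef, Vr_eq n r h1 h2]; omega
    have hVtop : V (n + 2) = 0 := Vr_top n r
    have hVint : ∀ m c, 1 ≤ m → m ≤ n + 1 → V m < c → c < m → V m ≤ V c := by
      intro m t h1 h2 h3 h4
      have hVm : V m = m - 1 - r ⟨m - 1, by omega⟩ := Vr_eq n r h1 h2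
      have ht1 : 1 ≤ t := by rw [hVm] at h3; omega
      have hVt : V t = t - 1 - r ⟨t - 1, by omega⟩ := Vr_eq n r ht1 (by omega)
      have hrm := hr2 ⟨m - 1, by omega⟩
      have hrt := hr2 ⟨t - 1, by omega⟩
      simp only [Fin.val_mk] at hrm hrt
      have hkey := hr1 ⟨t - 1, by omega⟩ ⟨m - 1, by omega⟩
        (by rw [Fin.lt_def]; show t - 1 < m - 1; omega)
        (by show m - 1 - (t - 1) ≤ r ⟨m - 1, by omega⟩; rw [hVm] at h3; omega)
      simp only [Fin.val_mk] at hkey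
      rw [hVm, hVt]
      omega
    refine ⟨goodTri hVlt hVint hVtop, ?_⟩
    intro k
    have hk := k.isLt
    obtain ⟨v, hv1, hv2, hv3, hv4⟩ := brA_spec n (goodTri hVlt hVint hVtop) k
    have hdiags : (goodTri hVlt hVint hVtop).diags = goodSet n V := rfl
    have hVk := hVval k
    have hrk := hr2 k
    have hveq : v = (k : ℕ) - r k := by
      have hle1 : v ≤ (k : ℕ) - r k := by
        rcases Nat.eq_zero_or_pos (r k) with h0 | h0
        · rw [h0]; simpa using hv1
        · have hmem := claim1 hVlt hVint (m := (k : ℕ) + 1) (by omega) (by omega)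
            (by rw [hVk]; omega)
          have h := hv4 _ (by rw [hdiags]; exact hmem) rfl
          have h' : v ≤ V ((k : ℕ) + 1) := h
          rw [hVk] at h'
          exact h'
      have hle2 : (k : ℕ) - r k ≤ v := by
        rcases hv3 with h | h
        · omega
        · obtain ⟨p, hp, hp1, hp2⟩ := h
          rw [hdiags] at hp
          have h := (mem_goodSet.1 hp).2.2.1
          have hp2' : (p.2 : ℕ) = (k : ℕ) + 1 := by rw [hp2]; rfl
          rw [hp2', hVk] at h
          omega
      omega
    rw [hv2, hveq]
    omega
end

section
/- The set of (n+1)-tuples (r_1,...,r_{n+1}) of nonnegative integers satisfying (i) r_i ≤ r_j - (j-i) whenever 1 ≤ i < j ≤ n+1 and r_j - (j-i) ≥ 0, and (ii) 0 ≤ r_i ≤ i-1, is closed under componentwise minimum. -/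
/-- Condition (ii) for type `A_n` bracket vectors: `0 ≤ r_i ≤ i - 1`
(0-based: `r k ≤ k`). -/
def entriesA (n : ℕ) (r : Fin (n + 1) → ℕ) : Prop :=
  ∀ k : Fin (n + 1), r k ≤ (k : ℕ)

/-- The set of `(n+1)`-tuples satisfying conditions (i) and (ii) is closed under
componentwise minimum. -/
theorem bracket_vectors_closed_under_min (n : ℕ) (r s : Fin (n + 1) → ℕ)
    (hr : condIA n r ∧ entriesA n r) (hs : condIA n s ∧ entriesA n s) :
    condIA n (fun k => min (r k) (s k)) ∧ entriesA n (fun k => min (r k) (s k)) := by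
  obtain ⟨hr1, hr2⟩ := hr
  obtain ⟨hs1, hs2⟩ := hs
  constructor
  · intro i j hij hd
    simp only at hd ⊢
    have h1 := hr1 i j hij (hd.trans (min_le_left _ _))
    have h2 := hs1 i j hij (hd.trans (min_le_right _ _))
    exact le_min (le_trans (by gcongr; exact min_le_left _ _) h1)
      (le_trans (by gcongr; exact min_le_right _ _) h2)
  · intro k
    exact le_trans (min_le_left _ _) (hr2 k)
end

section
/- For any (n+1)-tuple x satisfying 0 ≤ x_i ≤ i-1 for all i, there exists a unique componentwise-minimal (n+1)-tuple g with g ≥ x componentwise such that g satisfies condition (i): g_i ≤ g_j - (j-i) whenever i < j and g_j - (j-i) ≥ 0. Explicitly, g is given inductively by g_i = max over 0 ≤ j ≤ x_i of (g_{i-j} + j). -/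
/-- The inductive closure: `g_i = max over 0 ≤ j ≤ x_i of (g_{i-j} + j)`,
where the `j = 0` term is read as `x_i` itself. -/
def upA (x : ℕ → ℕ) : ℕ → ℕ := fun k =>
  Finset.sup (Finset.range (x k + 1)) fun j =>
    if h : 0 < j ∧ j ≤ k then upA x (k - j) + j else x k
termination_by k => k
decreasing_by omega

section upA

variable (x : ℕ → ℕ)

lemma le_upA (k : ℕ) : x k ≤ upA x k := by
  rw [upA.eq_1]
  simpa using Finset.le_sup
    (f := fun j => if h : 0 < j ∧ j ≤ k then upA x (k - j) + j else x k)
    (Finset.mem_range.mpr (Nat.succ_pos (x k)))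

lemma upA_sub_add_le_of_le {k j : ℕ} (hj : 0 < j) (hjx : j ≤ x k) (hjk : j ≤ k) :
    upA x (k - j) + j ≤ upA x k := by
  rw [upA.eq_1 x k]
  simpa [hj, hjk] using Finset.le_sup
    (f := fun j => if h : 0 < j ∧ j ≤ k then upA x (k - j) + j else x k)
    (Finset.mem_range.mpr (Nat.lt_succ_of_le hjx))

lemma upA_eq_or_exists (k : ℕ) :
    upA x k = x k ∨ ∃ j, 0 < j ∧ j ≤ x k ∧ j ≤ k ∧ upA x k = upA x (k - j) + j := by
  obtain ⟨j, hjx, hj⟩ := Finset.exists_mem_eq_sup (Finset.range (x k + 1)) ⟨0, by simp⟩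
    fun j => if h : 0 < j ∧ j ≤ k then upA x (k - j) + j else x k
  rw [← upA.eq_1] at hj
  by_cases hjk : 0 < j ∧ j ≤ k
  · rw [dif_pos hjk] at hj
    exact Or.inr ⟨j, hjk.1, Nat.lt_succ_iff.mp (Finset.mem_range.mp hjx), hjk.2, hj⟩
  · rw [dif_neg hjk] at hj
    exact Or.inl hj

lemma upA_sub_add_le_of_le_upA {k d : ℕ} (hd : 0 < d) (hdk : d ≤ k) (hdu : d ≤ upA x k) :
    upA x (k - d) + d ≤ upA x k := by
  induction k using Nat.strong_induction_on generalizing d with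
  | _ k ih =>
    rcases upA_eq_or_exists x k with hxk | ⟨j, hj, hjx, hjk, hjump⟩
    · exact upA_sub_add_le_of_le x hd (hxk ▸ hdu) hdk
    · by_cases hdj : d ≤ j
      · exact upA_sub_add_le_of_le x hd (hdj.trans hjx) hdk
      · have hcomp := ih (k - j) (by omega) (d := d - j) (by omega) (by omega) (by omega)
        rw [show k - j - (d - j) = k - d by omega] at hcomp
        omega

end upA

lemma condIA_upA (n : ℕ) (x : ℕ → ℕ) : condIA n fun k : Fin (n + 1) => upA x k := by
  intro i j hij hle
  have hi : (j : ℕ) - ((j : ℕ) - i) = i := by omega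
  simpa only [hi] using upA_sub_add_le_of_le_upA x (by omega) (Nat.sub_le _ _) hle

lemma upA_le_of_condIA {n : ℕ} {x : Fin (n + 1) → ℕ} {y : ℕ → ℕ}
    (hy : ∀ k : Fin (n + 1), y k = x k) {h : Fin (n + 1) → ℕ} (hh : condIA n h) (hxh : x ≤ h)
    (k : Fin (n + 1)) : upA y k ≤ h k := by
  induction k using WellFoundedLT.induction with
  | _ k ih =>
    rw [upA.eq_1]
    refine Finset.sup_le fun j hj => ?_
    have hjh : j ≤ h k := (Nat.lt_succ_iff.mp (Finset.mem_range.mp hj)).trans (hy k ▸ hxh k)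
    split_ifs with hjk
    · let i : Fin (n + 1) := ⟨k - j, by omega⟩
      have hik : i < k := Fin.lt_def.mpr (by simp only [i]; omega)
      have hkj : (k : ℕ) - i = j := by simp only [i]; omega
      have := hh i k hik (hkj ▸ hjh)
      rw [hkj] at this
      exact (Nat.add_le_add_right (ih i hik) j).trans this
    · exact hy k ▸ hxh k

lemma isLeast_condIA_iff {n : ℕ} {x g : Fin (n + 1) → ℕ} :
    IsLeast {h | condIA n h ∧ x ≤ h} g ↔
      condIA n g ∧ x ≤ g ∧ ∀ h : Fin (n + 1) → ℕ, condIA n h → x ≤ h → g ≤ h := by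
  simp only [IsLeast, lowerBounds, Set.mem_ofPred_eq, and_imp, and_assoc]

theorem upA_spec_general (n : ℕ) (x : Fin (n + 1) → ℕ) :
    (∃! g : Fin (n + 1) → ℕ,
      condIA n g ∧ x ≤ g ∧ ∀ h : Fin (n + 1) → ℕ, condIA n h → x ≤ h → g ≤ h) ∧
    (∀ g : Fin (n + 1) → ℕ,
      (condIA n g ∧ x ≤ g ∧ ∀ h : Fin (n + 1) → ℕ, condIA n h → x ≤ h → g ≤ h) →
      ∀ k : Fin (n + 1), g k = upA (fun m => if h : m < n + 1 then x ⟨m, h⟩ else 0) k) := by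
  set y : ℕ → ℕ := fun m => if h : m < n + 1 then x ⟨m, h⟩ else 0
  have hy : ∀ k : Fin (n + 1), y k = x k := fun k => dif_pos k.isLt
  have hleast : IsLeast {h | condIA n h ∧ x ≤ h} fun k : Fin (n + 1) => upA y k :=
    ⟨⟨condIA_upA n y, fun k => hy k ▸ le_upA y k⟩,
      fun h hh => upA_le_of_condIA hy hh.1 hh.2⟩
  have hunique : ∀ g, (condIA n g ∧ x ≤ g ∧ ∀ h, condIA n h → x ≤ h → g ≤ h) →
      g = fun k : Fin (n + 1) => upA y k :=
    fun g hg => (isLeast_condIA_iff.mpr hg).unique hleast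
  exact ⟨⟨_, isLeast_condIA_iff.mp hleast, hunique⟩, fun g hg => congrFun (hunique g hg)⟩

/-- For any `(n+1)`-tuple `x` with `0 ≤ x_i ≤ i-1`, there is a unique
componentwise-minimal tuple `g ≥ x` satisfying condition (i), and it is given
by the inductive formula `g_i = max_{0 ≤ j ≤ x_i} (g_{i-j} + j)`. -/
theorem upA_spec (n : ℕ) (x : Fin (n + 1) → ℕ) (hx : ∀ k, x k ≤ (k : ℕ)) :
    (∃! g : Fin (n + 1) → ℕ,
      condIA n g ∧ x ≤ g ∧ ∀ h : Fin (n + 1) → ℕ, condIA n h → x ≤ h → g ≤ h) ∧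
    (∀ g : Fin (n + 1) → ℕ,
      (condIA n g ∧ x ≤ g ∧ ∀ h : Fin (n + 1) → ℕ, condIA n h → x ≤ h → g ≤ h) →
      ∀ k : Fin (n + 1), g k = upA (fun m => if h : m < n + 1 then x ⟨m, h⟩ else 0) k) :=
  upA_spec_general n x
end

section
/- The set of bracket vectors of type A_n triangulations, ordered componentwise, forms a lattice in which the meet is the componentwise minimum and the join of r and s is the unique minimal bracket vector componentwise above max(r,s). -/
/-- A type `A_n` bracket vector. -/
def isAVec (n : ℕ) (r : Fin (n + 1) → ℕ) : Prop := condIA n r ∧ entriesA n r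

theorem InfClosed.exists_isLeast_of_finite {α : Type*} [SemilatticeInf α] {s : Set α}
    (hs : InfClosed s) (hfin : s.Finite) (hne : s.Nonempty) : ∃ a, IsLeast s a :=
  ⟨hfin.toFinset.inf' (hfin.toFinset_nonempty.2 hne) id,
    hs.finsetInf'_mem _ fun _ hx => hfin.mem_toFinset.1 hx,
    fun _ hx => Finset.inf'_le id (hfin.mem_toFinset.2 hx)⟩

theorem InfClosed.existsUnique_isLeast_of_finite {α : Type*} [SemilatticeInf α] {s : Set α}
    (hs : InfClosed s) (hfin : s.Finite) (hne : s.Nonempty) : ∃! a, IsLeast s a :=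
  (hs.exists_isLeast_of_finite hfin hne).elim fun a ha => ⟨a, ha, fun _ hb => hb.unique ha⟩

section BracketVector

variable {n : ℕ} {r s : Fin (n + 1) → ℕ}

theorem condIA_inf (hr : condIA n r) (hs : condIA n s) : condIA n (r ⊓ s) := by
  intro i j hij hle
  have hri := hr i j hij (hle.trans inf_le_left)
  have hsi := hs i j hij (hle.trans inf_le_right)
  simp only [Pi.inf_apply] at *
  omega

theorem entriesA_inf_of_left (hr : entriesA n r) (s : Fin (n + 1) → ℕ) : entriesA n (r ⊓ s) :=
  fun k => inf_le_left.trans (hr k)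

theorem entriesA_sup (hr : entriesA n r) (hs : entriesA n s) : entriesA n (r ⊔ s) :=
  fun k => sup_le (hr k) (hs k)

theorem isAVec_inf (hr : isAVec n r) (hs : isAVec n s) : isAVec n (r ⊓ s) :=
  ⟨condIA_inf hr.1 hs.1, entriesA_inf_of_left hr.2 s⟩

theorem isAVec_val : isAVec n fun k => (k : ℕ) :=
  ⟨fun i j hij _ => show (i : ℕ) + (j - i) ≤ j by omega, fun _ => le_rfl⟩

theorem finite_setOf_entriesA : {r | entriesA n r}.Finite :=
  (Set.Finite.pi fun k : Fin (n + 1) => Set.finite_Iic (k : ℕ)).subset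
    fun _ hr k _ => hr k

theorem existsUnique_isLeast_isAVec_ge {t : Fin (n + 1) → ℕ} (ht : entriesA n t) :
    ∃! j, IsLeast {h | isAVec n h ∧ t ≤ h} j := by
  refine InfClosed.existsUnique_isLeast_of_finite ?_ ?_ ⟨_, isAVec_val, ht⟩
  · rintro a ⟨ha, hta⟩ b ⟨hb, htb⟩
    exact ⟨isAVec_inf ha hb, le_inf hta htb⟩
  · exact finite_setOf_entriesA.subset fun _ hh => hh.1.2

end BracketVector

/-- The set of type `A_n` bracket vectors, ordered componentwise, is a lattice:
the componentwise minimum of two bracket vectors is again a bracket vector (hence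
is the meet), and there is a unique minimal bracket vector componentwise above
`max(r,s)` (which is the join). -/
theorem tamariA_lattice (n : ℕ) (r s : Fin (n + 1) → ℕ)
    (hr : isAVec n r) (hs : isAVec n s) :
    isAVec n (fun k => min (r k) (s k)) ∧
      ∃! j : Fin (n + 1) → ℕ, isAVec n j ∧ (fun k => max (r k) (s k)) ≤ j ∧
        ∀ h : Fin (n + 1) → ℕ, isAVec n h → (fun k => max (r k) (s k)) ≤ h → j ≤ h :=
  ⟨isAVec_inf hr hs, by
    simpa only [IsLeast, lowerBounds, Set.mem_ofPred_eq, and_imp, and_assoc] using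
      existsUnique_isLeast_isAVec_ge (t := fun k => max (r k) (s k)) (entriesA_sup hr.2 hs.2)⟩
end

section
/- The componentwise maximum of two n-tuples (with entries in {0,...,n-1} ∪ {∞}) each satisfying condition (ii) also satisfies condition (ii). -/
/-- Condition (i) for type `B_n` bracket vectors: for `i < j` (0-based),
if `r_j - (j-i)` is a nonnegative integer then `r_i ≤ r_j - (j-i)`
(equivalently `r_i + (j-i) ≤ r_j`; when `r_j = ∞` this holds trivially,
matching the convention that `∞` minus an integer is `∞`). -/
def condIB (n : ℕ) (r : Fin n → ℕ∞) : Prop :=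
  ∀ i j : Fin n, i < j → (((j : ℕ) - (i : ℕ) : ℕ) : ℕ∞) ≤ r j →
    r i + (((j : ℕ) - (i : ℕ) : ℕ) : ℕ∞) ≤ r j

/-- Condition (ii) for type `B_n` bracket vectors: if `∞ > r_i ≥ i`
(1-based; here `i = k+1` for the 0-based index `k`) then `r_{n+i-r_i} = ∞`. -/
def condIIB (n : ℕ) (r : Fin n → ℕ∞) : Prop :=
  ∀ (k : Fin n) (t : ℕ), r k = (t : ℕ∞) → ∀ _ht : (k : ℕ) + 1 ≤ t,
    r ⟨n + (k : ℕ) - t, by have := k.isLt; omega⟩ = ⊤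

/-- Entries lie in `{0, …, n-1} ∪ {∞}`. -/
def entriesB (n : ℕ) (r : Fin n → ℕ∞) : Prop :=
  ∀ k, r k = ⊤ ∨ r k ≤ ((n - 1 : ℕ) : ℕ∞)

/-- A type `B_n` bracket vector. -/
def isBVec (n : ℕ) (r : Fin n → ℕ∞) : Prop :=
  entriesB n r ∧ condIB n r ∧ condIIB n r

theorem max_satisfies_condII_general (n : ℕ) (r s : Fin n → ℕ∞)
    (hr2 : condIIB n r) (hs2 : condIIB n s) :
    condIIB n (fun k => max (r k) (s k)) := by
  intro k t hmax ht
  rcases max_choice (r k) (s k) with h | h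
  · exact max_eq_top.2 (Or.inl (hr2 k t (h.symm.trans hmax) ht))
  · exact max_eq_top.2 (Or.inr (hs2 k t (h.symm.trans hmax) ht))

/-- The componentwise maximum of two `n`-tuples with entries in
`{0,…,n-1} ∪ {∞}` each satisfying condition (ii) also satisfies
condition (ii). -/
theorem max_satisfies_condII (n : ℕ) (r s : Fin n → ℕ∞)
    (hr : entriesB n r) (hs : entriesB n s)
    (hr2 : condIIB n r) (hs2 : condIIB n s) :
    condIIB n (fun k => max (r k) (s k)) :=
  max_satisfies_condII_general n r s hr2 hs2
end

section
/- For any n-tuple f with entries in {0,...,n-1} ∪ {∞} satisfying condition (ii), the vector g defined inductively by g_i = max over 0 ≤ j ≤ f_i of (g_{i-j} + j) (with the conventions that ∞ plus an integer is ∞, and g_0 = 0) satisfies both conditions (i) and (ii), satisfies g ≥ f componentwise, and is the componentwise-least such vector: for any vector h satisfying (i) and (ii), h ≥ f componentwise if and only if h ≥ g componentwise. -/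
/-- The inductive closure `↑`: `g_i = max over 0 ≤ j ≤ f_i of (g_{i-j} + j)`,
with the conventions that the `j = 0` term is `f_i`, that `g_0 = 0` (so the
term for `j = k + 1`, reaching index `0`, is just `j`), and that `∞` plus an
integer is `∞`.  Indices here are 0-based, so the index `k` corresponds to
`i = k + 1`. -/
noncomputable def upB (f : ℕ → ℕ∞) : ℕ → ℕ∞ := fun k =>
  Finset.sup (Finset.range (k + 2)) fun j =>
    if _h : 0 < j ∧ (j : ℕ∞) ≤ f k then
      (if _h2 : j ≤ k then upB f (k - j) + (j : ℕ∞) else (j : ℕ∞))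
    else if j = 0 then f k else 0
termination_by k => k
decreasing_by omega

/-- The closure of an `n`-tuple, as an `n`-tuple. -/
noncomputable def upBF (n : ℕ) (f : Fin n → ℕ∞) : Fin n → ℕ∞ := fun k =>
  upB (fun m => if h : m < n then f ⟨m, h⟩ else 0) (k : ℕ)

/-!
Every value of the closure `g = upB f` is attained by a single term of its defining maximum:
either `g k = f k`, or `g k = g (k - j) + j` for some `0 < j ≤ f k`. Strong induction along
such witnesses gives everything. For condition (i), a distance `d > f k` at `k` is shortened
to `d - j` at `k - j`. For condition (ii), the chain of witnesses ends at an index where `g`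
agrees with `f`, and the target index `n + k - t` is the same at every link of the chain. For
minimality, `g (k - j) + j ≤ h (k - j) + j ≤ h k` by condition (i) for `h`.
-/

def condIBNat (r : ℕ → ℕ∞) : Prop :=
  ∀ k d : ℕ, d ≤ k → (d : ℕ∞) ≤ r k → r (k - d) + d ≤ r k

def condIIBNat (n : ℕ) (r : ℕ → ℕ∞) : Prop :=
  ∀ k t : ℕ, r k = t → k + 1 ≤ t → r (n + k - t) = ⊤

section Closure

variable (f : ℕ → ℕ∞)

theorem le_upB (k : ℕ) : f k ≤ upB f k := by
  rw [upB]
  refine le_trans ?_ (Finset.le_sup (Finset.mem_range.2 (by omega : 0 < k + 2)))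
  simp

theorem upB_sub_add_le {k j : ℕ} (hj : 0 < j) (hjk : j ≤ k) (hjf : (j : ℕ∞) ≤ f k) :
    upB f (k - j) + j ≤ upB f k := by
  conv_rhs => rw [upB]
  refine le_trans ?_ (Finset.le_sup (Finset.mem_range.2 (by omega : j < k + 2)))
  rw [dif_pos ⟨hj, hjf⟩, dif_pos hjk]

theorem upB_eq_or_exists (k : ℕ) :
    upB f k = f k ∨ ∃ j, 0 < j ∧ j ≤ k ∧ (j : ℕ∞) ≤ f k ∧ upB f k = upB f (k - j) + j := by
  obtain ⟨j, -, hsup⟩ : ∃ j ∈ Finset.range (k + 2), upB f k = _ := by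
    rw [upB]; exact Finset.exists_mem_eq_sup _ Finset.nonempty_range_add_one _
  by_cases hadm : 0 < j ∧ (j : ℕ∞) ≤ f k
  · rw [dif_pos hadm] at hsup
    by_cases hjk : j ≤ k
    · rw [dif_pos hjk] at hsup
      exact Or.inr ⟨j, hadm.1, hjk, hadm.2, hsup⟩
    · rw [dif_neg hjk] at hsup
      exact Or.inl (le_antisymm (hsup ▸ hadm.2) (le_upB f k))
  · rw [dif_neg hadm] at hsup
    split_ifs at hsup
    · exact Or.inl hsup
    · exact Or.inl (le_antisymm (hsup ▸ zero_le) (le_upB f k))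

theorem condIBNat_upB : condIBNat (upB f) := by
  intro k
  induction k using Nat.strong_induction_on with
  | _ k ih =>
  intro d hdk hd
  rcases Nat.eq_zero_or_pos d with rfl | hd0
  · simp
  by_cases hdf : (d : ℕ∞) ≤ f k
  · exact upB_sub_add_le f hd0 hdk hdf
  rcases upB_eq_or_exists f k with hfk | ⟨j, hj0, hjk, hjf, hk⟩
  · exact absurd (hfk ▸ hd) hdf
  have hjd : j < d := by
    by_contra! h
    exact hdf ((Nat.cast_le.2 h).trans hjf)
  have hd' : ((d - j : ℕ) : ℕ∞) ≤ upB f (k - j) := by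
    rw [ENat.natCast_sub, tsub_le_iff_right, ← hk]
    exact hd
  calc upB f (k - d) + d = upB f (k - j - (d - j)) + (d - j : ℕ) + j := by
        rw [add_assoc, ← Nat.cast_add, Nat.sub_add_cancel hjd.le,
          Nat.sub_sub_sub_cancel_right hjd.le]
    _ ≤ upB f (k - j) + j := by gcongr; exact ih (k - j) (by omega) (d - j) (by omega) hd'
    _ = upB f k := hk.symm

theorem condIIBNat_upB {n : ℕ} (hf : condIIBNat n f) : condIIBNat n (upB f) := by
  intro k
  induction k using Nat.strong_induction_on with
  | _ k ih =>
  intro t hkt ht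
  rcases upB_eq_or_exists f k with hfk | ⟨j, hj0, hjk, -, hk⟩
  · exact top_le_iff.1 (hf k t (hfk ▸ hkt) ht ▸ le_upB f _)
  rw [hk] at hkt
  lift upB f (k - j) to ℕ using (by rintro h; simp [h] at hkt) with m hm
  have hmt : m + j = t := by exact_mod_cast hkt
  have := ih (k - j) (by omega) m hm.symm (by omega)
  rwa [show n + (k - j) - m = n + k - t by omega] at this

end Closure

theorem upB_le_of_condIBNat {f g : ℕ → ℕ∞} (hg : condIBNat g) (hfg : f ≤ g) : upB f ≤ g := by
  intro k
  induction k using Nat.strong_induction_on with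
  | _ k ih =>
  rcases upB_eq_or_exists f k with hfk | ⟨j, hj0, hjk, hjf, hk⟩
  · exact hfk ▸ hfg k
  calc upB f k = upB f (k - j) + j := hk
    _ ≤ g (k - j) + j := by gcongr; exact ih _ (by omega)
    _ ≤ g k := hg k j hjk (hjf.trans (hfg k))

section Tuples

variable {n : ℕ}

def extendZero (n : ℕ) (r : Fin n → ℕ∞) : ℕ → ℕ∞ := fun m => if h : m < n then r ⟨m, h⟩ else 0

theorem extendZero_val (r : Fin n → ℕ∞) (k : Fin n) : extendZero n r k = r k :=
  dif_pos k.isLt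

theorem extendZero_mono {r s : Fin n → ℕ∞} (h : r ≤ s) : extendZero n r ≤ extendZero n s := by
  intro m
  unfold extendZero
  split_ifs
  exacts [h _, le_rfl]

theorem upBF_apply (f : Fin n → ℕ∞) (k : Fin n) : upBF n f k = upB (extendZero n f) k := rfl

theorem condIBNat.condIB {r : ℕ → ℕ∞} (hr : condIBNat r) : condIB n (fun k => r k) := by
  intro i j hij hd
  have hij : (i : ℕ) ≤ j := hij.le
  simpa only [Nat.sub_sub_self hij] using hr j (j - i) (by omega) hd

theorem condIIBNat.condIIB {r : ℕ → ℕ∞} (hr : condIIBNat n r) : condIIB n (fun k => r k) :=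
  fun k t hkt ht => hr k t hkt ht

theorem condIB.extendZero {r : Fin n → ℕ∞} (hr : condIB n r) : condIBNat (extendZero n r) := by
  intro k d hdk hd
  rcases Nat.eq_zero_or_pos d with rfl | hd0
  · simp
  have hk : k < n := by
    by_contra hk
    simp only [_root_.extendZero, hk, dite_false, nonpos_iff_eq_zero, Nat.cast_eq_zero] at hd
    omega
  have hkd : k - d < n := by omega
  have := hr ⟨k - d, hkd⟩ ⟨k, hk⟩ (Fin.mk_lt_mk.2 (by omega))
  simp only [Nat.sub_sub_self hdk] at this
  simp only [_root_.extendZero, hk, hkd, dite_true] at hd ⊢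
  exact this hd

theorem condIIB.extendZero {r : Fin n → ℕ∞} (hr : condIIB n r) :
    condIIBNat n (extendZero n r) := by
  intro k t hkt ht
  by_cases hk : k < n
  · simp only [_root_.extendZero, hk, dite_true] at hkt
    simpa only [_root_.extendZero, show n + k - t < n by omega, dite_true] using hr _ t hkt ht
  · simp only [_root_.extendZero, hk, dite_false] at hkt
    exact absurd (by exact_mod_cast hkt.symm) (by omega : t ≠ 0)

end Tuples

theorem upB_spec_general (n : ℕ) (f : Fin n → ℕ∞)
    (hf2 : condIIB n f) :
    condIB n (upBF n f) ∧ condIIB n (upBF n f) ∧ f ≤ upBF n f ∧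
      ∀ h : Fin n → ℕ∞, entriesB n h → condIB n h → condIIB n h →
        (f ≤ h ↔ upBF n f ≤ h) := by
  have hfg : f ≤ upBF n f := fun k => by
    simpa only [upBF_apply, extendZero_val] using le_upB (extendZero n f) k
  refine ⟨(condIBNat_upB _).condIB, (condIIBNat_upB _ hf2.extendZero).condIIB, hfg,
    fun h _ hh1 _ => ⟨fun hfh k => ?_, hfg.trans⟩⟩
  simpa only [upBF_apply, extendZero_val] using
    upB_le_of_condIBNat hh1.extendZero (extendZero_mono hfh) k

/-- For any `f` with entries in `{0,…,n-1} ∪ {∞}` satisfying condition (ii),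
the vector `g = ↑(f)` defined by `g_i = max_{0 ≤ j ≤ f_i} (g_{i-j} + j)`
satisfies conditions (i) and (ii), satisfies `g ≥ f`, and is componentwise
least such: for any vector `h` satisfying (i) and (ii), `h ≥ f` iff `h ≥ g`. -/
theorem upB_spec (n : ℕ) (f : Fin n → ℕ∞)
    (hf0 : entriesB n f) (hf2 : condIIB n f) :
    condIB n (upBF n f) ∧ condIIB n (upBF n f) ∧ f ≤ upBF n f ∧
      ∀ h : Fin n → ℕ∞, entriesB n h → condIB n h → condIIB n h →
        (f ≤ h ↔ upBF n f ≤ h) :=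
  upB_spec_general n f hf2
end

section
/- The set of type B_n bracket vectors with the componentwise order is a lattice, in which the meet of r and s is ↓(min(r,s)) and the join is ↑(max(r,s)), where min and max are componentwise, ↑ sends a vector satisfying (ii) to the least bracket vector above it, and ↓ sends a vector satisfying (i) to the greatest bracket vector below it. -/
/-!
Condition (i) and the range condition on the entries are preserved by arbitrary pointwise infima.
A vector `f` satisfying them has a greatest bracket vector `↓f` below it: keep the infinite
entries and lower each finite entry `f k` to the largest `t ≤ f k` for which condition (ii) is
already guaranteed by `f`, i.e. `t ≤ k` or `f` is `∞` at the index that (ii) asks about.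
The meet of `r, s` is then `↓(min r s)`, and their join is `↓` of the pointwise infimum of all
bracket vectors above `max r s`, which is the least bracket vector above `max r s`.
-/

namespace BracketB

variable {n : ℕ}

/-- `j + t = n + k` is the 0-based form of the index `n + i - r_i` of condition (ii). -/
def Admissible (f : Fin n → ℕ∞) (k : Fin n) (t : ℕ) : Prop :=
  (t : ℕ∞) ≤ f k ∧ (t ≤ k ∨ ∃ j : Fin n, (j : ℕ) + t = n + k ∧ f j = ⊤)

instance (f : Fin n → ℕ∞) (k : Fin n) : DecidablePred (Admissible f k) := fun _ => by
  unfold Admissible; infer_instance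

def down (f : Fin n → ℕ∞) : Fin n → ℕ∞ :=
  fun k => if f k = ⊤ then ⊤ else (Nat.findGreatest (Admissible f k) n : ℕ∞)

section down

variable {f h : Fin n → ℕ∞}

lemma down_of_eq_top {k : Fin n} (hk : f k = ⊤) : down f k = ⊤ := by
  simp [down, hk]

lemma down_of_ne_top {k : Fin n} (hk : f k ≠ ⊤) :
    down f k = (Nat.findGreatest (Admissible f k) n : ℕ∞) := by
  simp [down, hk]

lemma admissible_findGreatest (k : Fin n) :
    Admissible f k (Nat.findGreatest (Admissible f k) n) :=
  Nat.findGreatest_spec (Nat.zero_le n) ⟨by simp, Or.inl (Nat.zero_le _)⟩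

lemma down_le : down f ≤ f := by
  intro k
  by_cases hk : f k = ⊤
  · simp [down_of_eq_top hk, hk]
  · rw [down_of_ne_top hk]
    exact admissible_findGreatest k |>.1

lemma le_down (hf : entriesB n f) (hh : condIIB n h) (hle : h ≤ f) : h ≤ down f := by
  intro k
  by_cases hfk : f k = ⊤
  · simp [down_of_eq_top hfk]
  obtain ⟨t, ht⟩ : ∃ t : ℕ, h k = t :=
    WithTop.ne_top_iff_exists.mp (ne_top_of_le_ne_top hfk (hle k)) |>.imp fun _ => Eq.symm
  have htf : (t : ℕ∞) ≤ f k := ht ▸ hle k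
  have htn : t ≤ n - 1 := by exact_mod_cast htf.trans ((hf k).resolve_left hfk)
  rw [down_of_ne_top hfk, ht, Nat.cast_le]
  refine Nat.le_findGreatest (by omega) ⟨htf, ?_⟩
  by_cases htk : t ≤ k
  · exact Or.inl htk
  · have hk := k.isLt
    refine Or.inr ⟨⟨n + k - t, by omega⟩, by simp only; omega, ?_⟩
    exact top_le_iff.mp (hh k t ht (by omega) ▸ hle _)

lemma le_down_iff (hf : entriesB n f) (hh : condIIB n h) : h ≤ down f ↔ h ≤ f :=
  ⟨fun hle => hle.trans down_le, le_down hf hh⟩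

lemma entriesB_down (hf : entriesB n f) : entriesB n (down f) := fun k =>
  (hf k).imp down_of_eq_top fun hk => (down_le k).trans hk

lemma condIIB_down : condIIB n (down f) := by
  intro k t hkt htk
  have hfk : f k ≠ ⊤ := fun hfk => by simp [down_of_eq_top hfk] at hkt
  rw [down_of_ne_top hfk, Nat.cast_inj] at hkt
  obtain ⟨-, hsmall | ⟨j, hj, hfj⟩⟩ := hkt ▸ admissible_findGreatest (f := f) k
  · omega
  · convert down_of_eq_top hfj using 2
    ext
    simp only
    omega

lemma condIB_down (hf : entriesB n f) (hfI : condIB n f) : condIB n (down f) := by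
  intro i j hij hdj
  set d := (j : ℕ) - i
  by_cases hfj : f j = ⊤
  · simp [down_of_eq_top hfj]
  have hdf : (d : ℕ∞) ≤ f j := hdj.trans (down_le j)
  have hfi : f i ≠ ⊤ := fun hfi => hfj <| top_le_iff.mp <| by
    simpa [hfi] using hfI i j hij hdf
  rw [down_of_ne_top hfi, down_of_ne_top hfj, ← Nat.cast_add, Nat.cast_le]
  obtain ⟨hu, hu'⟩ := admissible_findGreatest (f := f) i
  set u := Nat.findGreatest (Admissible f i) n
  have hudf : ((u + d : ℕ) : ℕ∞) ≤ f j := by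
    push_cast
    exact (add_le_add_left hu _).trans (hfI i j hij hdf)
  have hudn : u + d ≤ n - 1 := by exact_mod_cast hudf.trans ((hf j).resolve_left hfj)
  have hij' : (i : ℕ) < j := hij
  refine Nat.le_findGreatest (by omega) ⟨hudf, ?_⟩
  -- shifting `i` to `j` and the value `u` to `u + d` does not move the index of condition (ii)
  rcases hu' with hui | ⟨l, hl, hfl⟩
  · exact Or.inl (by omega)
  · exact Or.inr ⟨l, by omega, hfl⟩

lemma isBVec_down (hf : entriesB n f) (hfI : condIB n f) : isBVec n (down f) :=
  ⟨entriesB_down hf, condIB_down hf hfI, condIIB_down⟩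

end down

section sInf

variable {S : Set (Fin n → ℕ∞)}

lemma entriesB_sInf (hS : ∀ x ∈ S, entriesB n x) : entriesB n (sInf S) := by
  intro k
  refine or_iff_not_imp_left.mpr fun hk => ?_
  obtain ⟨⟨x, hx⟩, hxk⟩ := iInf_lt_iff.mp (sInf_apply (s := S) (a := k) ▸ lt_top_iff_ne_top.mpr hk)
  exact (sInf_le hx k).trans ((hS x hx k).resolve_left hxk.ne)

lemma condIB_sInf (hS : ∀ x ∈ S, condIB n x) : condIB n (sInf S) := by
  intro i j hij hdj
  rw [sInf_apply]
  refine le_iInf fun ⟨x, hx⟩ => ?_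
  exact (add_le_add_left (sInf_le hx i) _).trans (hS x hx i j hij (hdj.trans (sInf_le hx j)))

lemma isBVec_down_sInf (hS : ∀ x ∈ S, isBVec n x) : isBVec n (down (sInf S)) :=
  isBVec_down (entriesB_sInf fun x hx => (hS x hx).1) (condIB_sInf fun x hx => (hS x hx).2.1)

lemma le_down_sInf_iff (hS : ∀ x ∈ S, isBVec n x) {h : Fin n → ℕ∞} (hh : condIIB n h) :
    h ≤ down (sInf S) ↔ h ≤ sInf S :=
  le_down_iff (entriesB_sInf fun x hx => (hS x hx).1) hh

end sInf

end BracketB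

open BracketB in
/-- The type `B_n` bracket vectors, ordered componentwise, form a lattice:
for bracket vectors `r, s` there is a greatest bracket vector below the
componentwise minimum (namely `↓(min(r,s))`), which is then the meet, and a
least bracket vector above the componentwise maximum (namely `↑(max(r,s))`),
which is then the join. -/
theorem tamariB_lattice (n : ℕ) (r s : Fin n → ℕ∞)
    (hr : isBVec n r) (hs : isBVec n s) :
    (∃ m : Fin n → ℕ∞, isBVec n m ∧
      ∀ h : Fin n → ℕ∞, isBVec n h →
        ((h ≤ fun k => min (r k) (s k)) ↔ h ≤ m)) ∧
    (∃ j : Fin n → ℕ∞, isBVec n j ∧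
      ∀ h : Fin n → ℕ∞, isBVec n h →
        (((fun k => max (r k) (s k)) ≤ h) ↔ j ≤ h)) := by
  have hrs : ∀ x ∈ ({r, s} : Set _), isBVec n x := by simp [hr, hs]
  set U := {x | isBVec n x ∧ r ⊔ s ≤ x}
  have hU : ∀ x ∈ U, isBVec n x := fun x hx => hx.1
  have hrsU : r ⊔ s ≤ down (sInf U) := by
    have hle : r ⊔ s ≤ sInf U := le_sInf fun x hx => hx.2
    exact sup_le ((le_down_sInf_iff hU hr.2.2).mpr (le_sup_left.trans hle))
      ((le_down_sInf_iff hU hs.2.2).mpr (le_sup_right.trans hle))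
  refine ⟨⟨down (sInf {r, s}), isBVec_down_sInf hrs, fun h hh => ?_⟩,
    ⟨down (sInf U), isBVec_down_sInf hU, fun h hh => ?_⟩⟩
  · rw [le_down_sInf_iff hrs hh.2.2, sInf_pair]
    rfl
  · exact ⟨fun hle => down_le.trans (sInf_le ⟨hh, hle⟩), hrsU.trans⟩
end

section
/- The map from centrally symmetric triangulations of a (2n+2)-gon to their bracket vectors is injective. -/
/-- The half-turn rotation of the `(2n+2)`-gon: `w ↦ w + (n+1) (mod 2n+2)`. -/
def rotB (n : ℕ) (w : Fin (2 * n + 2)) : Fin (2 * n + 2) :=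
  w + ⟨n + 1, by omega⟩

/-- A type `B_n` triangulation: a triangulation of a convex `(2n+2)`-gon that
is fixed under a half-turn rotation.  The vertices are labelled clockwise
`1, …, n+1, 1̄, …, (n+1)̄`; here vertex `i` gets index `i - 1 ∈ Fin (2n+2)` and
vertex `j̄` gets index `n + j`.  A triangulation is a maximal collection of
pairwise noncrossing diagonals, each recorded as a pair `(a, b)` with
`a < b`. -/
structure TriB (n : ℕ) where
  /-- The diagonals of the triangulation. -/
  diags : Finset (Fin (2 * n + 2) × Fin (2 * n + 2))
  lt : ∀ p ∈ diags, p.1 < p.2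
  /-- Each chord is a diagonal: its endpoints are not adjacent on the polygon. -/
  isDiag : ∀ p ∈ diags, (p.1 : ℕ) + 1 < (p.2 : ℕ) ∧
    ¬((p.1 : ℕ) = 0 ∧ (p.2 : ℕ) = 2 * n + 1)
  /-- No two diagonals cross in the interior. -/
  noncross : ∀ p ∈ diags, ∀ q ∈ diags, ¬(p.1 < q.1 ∧ q.1 < p.2 ∧ p.2 < q.2)
  /-- Maximality: any diagonal crossing no diagonal of the collection belongs
  to it. -/
  maximal : ∀ c : Fin (2 * n + 2) × Fin (2 * n + 2), c.1 < c.2 →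
    ((c.1 : ℕ) + 1 < (c.2 : ℕ) ∧ ¬((c.1 : ℕ) = 0 ∧ (c.2 : ℕ) = 2 * n + 1)) →
    (∀ q ∈ diags, ¬(c.1 < q.1 ∧ q.1 < c.2 ∧ c.2 < q.2) ∧
      ¬(q.1 < c.1 ∧ c.1 < q.2 ∧ q.2 < c.2)) →
    c ∈ diags
  /-- Central symmetry: the collection is fixed under the half-turn. -/
  symm : ∀ p ∈ diags,
    (if rotB n p.1 < rotB n p.2 then (rotB n p.1, rotB n p.2)
      else (rotB n p.2, rotB n p.1)) ∈ diags

/-- The index of the vertex `i = k + 1`, for a 0-based index `k ∈ Fin n`. -/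
def vtxB (n : ℕ) (k : Fin n) : Fin (2 * n + 2) :=
  ⟨(k : ℕ), by have := k.isLt; omega⟩

/-- The index of the vertex `1̄`, from which the clockwise search starts. -/
def startB (n : ℕ) : Fin (2 * n + 2) := ⟨n + 1, by omega⟩

/-- The position of a vertex in the clockwise search order starting at `1̄`. -/
def keyB (n : ℕ) (w : Fin (2 * n + 2)) : Fin (2 * n + 2) := w - startB n

/-- The vertices joined to vertex `i = k + 1` by a chord of `T`, together with
the counterclockwise neighbour `i - 1` of `i` (the endpoint of the edge
segment used when no chord is found by the search). -/
noncomputable def nbrsB (n : ℕ) (T : TriB n) (k : Fin n) :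
    Finset (Fin (2 * n + 2)) :=
  insert (vtxB n k - ⟨1, by omega⟩)
    ((T.diags.filter fun p => p.1 = vtxB n k ∨ p.2 = vtxB n k).image
      fun p => if p.1 = vtxB n k then p.2 else p.1)

/-- The other endpoint `v_i` of `C_i(T)`: the first vertex connected to
`i = k + 1` (or the counterclockwise neighbour `i - 1`) encountered searching
clockwise from `1̄`. -/
noncomputable def endB (n : ℕ) (T : TriB n) (k : Fin n) : Fin (2 * n + 2) :=
  ((nbrsB n T k).image (keyB n)).min'
      ((Finset.insert_nonempty _ _).image _) + startB n

/-- The bracket vector of a type `B_n` triangulation: `r_i` is the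
counterclockwise distance from `i - 1` to the endpoint `v_i` of `C_i(T)` if
that distance is at most `n - 1`, and `∞` otherwise. -/
noncomputable def brB (n : ℕ) (T : TriB n) (k : Fin n) : ℕ∞ :=
  if ((vtxB n k - ⟨1, by omega⟩ - endB n T k : Fin (2 * n + 2)) : ℕ) ≤ n - 1
  then (((vtxB n k - ⟨1, by omega⟩ - endB n T k : Fin (2 * n + 2)) : ℕ) : ℕ∞)
  else ⊤

namespace BrBAux

variable {n : ℕ}

lemma modN (a : ℕ) (h : a < 2 * (2 * n + 2)) :
    a % (2 * n + 2) = if a < 2 * n + 2 then a else a - (2 * n + 2) := by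
  split_ifs with h1
  · exact Nat.mod_eq_of_lt h1
  · have h2 : a % (2 * n + 2) = ((a - (2 * n + 2)) + (2 * n + 2)) % (2 * n + 2) := by
      congr 1; omega
    rw [h2, Nat.add_mod_right, Nat.mod_eq_of_lt (by omega)]

/-- key value of a vertex, as a natural number -/
def kv (n : ℕ) (w : Fin (2 * n + 2)) : ℕ := ((keyB n w : Fin (2 * n + 2)) : ℕ)

lemma kv_eq (w : Fin (2 * n + 2)) : kv n w = ((w : ℕ) + (n + 1)) % (2 * n + 2) := by
  show ((w - startB n : Fin (2*n+2)) : ℕ) = _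
  rw [Fin.sub_def]
  show ((2 * n + 2) - (n+1) + (w : ℕ)) % (2 * n + 2) = _
  congr 1
  omega

lemma kv_spec (w : Fin (2 * n + 2)) :
    (n + 1 ≤ (w : ℕ) ∧ kv n w = (w : ℕ) - (n + 1)) ∨
    ((w : ℕ) < n + 1 ∧ kv n w = (w : ℕ) + (n + 1)) := by
  have hw := w.isLt
  rw [kv_eq, modN _ (by omega)]
  split_ifs with h1 <;> [right; left] <;> constructor <;> omega

lemma kv_lt (w : Fin (2 * n + 2)) : kv n w < 2 * n + 2 := Fin.isLt _

lemma kv_inj {x y : Fin (2 * n + 2)} (h : kv n x = kv n y) : x = y := by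
  rcases kv_spec x with ⟨h1, h2⟩ | ⟨h1, h2⟩ <;> rcases kv_spec y with ⟨h3, h4⟩ | ⟨h3, h4⟩ <;>
    (apply Fin.ext) <;> (have := x.isLt; have := y.isLt; omega)

lemma kv_add_start (x : Fin (2 * n + 2)) : kv n (x + startB n) = (x : ℕ) := by
  rw [kv_eq, Fin.val_add]
  show (((x : ℕ) + (n + 1)) % (2 * n + 2) + (n + 1)) % (2 * n + 2) = _
  rw [Nat.mod_add_mod]
  have h : (x : ℕ) + (n + 1) + (n + 1) = (x : ℕ) + (2 * n + 2) := by ring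
  rw [h, Nat.add_mod_right, Nat.mod_eq_of_lt x.isLt]

lemma keyB_add_start (w : Fin (2 * n + 2)) : keyB n w + startB n = w := by
  apply Fin.ext
  rw [Fin.val_add]
  show (kv n w + (n + 1)) % (2 * n + 2) = (w : ℕ)
  rcases kv_spec w with ⟨h1, h2⟩ | ⟨h1, h2⟩ <;>
    rw [h2, modN _ (by have := w.isLt; omega)] <;>
    (have := w.isLt; split_ifs <;> omega)


variable {T : TriB n} {k : Fin n}

lemma mem_nbrs_pred (h1 : (1 : ℕ) < 2 * n + 2) :
    (vtxB n k - ⟨1, h1⟩) ∈ nbrsB n T k := Finset.mem_insert_self _ _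

lemma mem_nbrs_left {p : Fin (2 * n + 2) × Fin (2 * n + 2)} (hp : p ∈ T.diags)
    (h : p.1 = vtxB n k) : p.2 ∈ nbrsB n T k := by
  apply Finset.mem_insert_of_mem
  exact Finset.mem_image.2 ⟨p, Finset.mem_filter.2 ⟨hp, Or.inl h⟩, by rw [if_pos h]⟩

lemma mem_nbrs_right {p : Fin (2 * n + 2) × Fin (2 * n + 2)} (hp : p ∈ T.diags)
    (h : p.2 = vtxB n k) : p.1 ∈ nbrsB n T k := by
  apply Finset.mem_insert_of_mem
  refine Finset.mem_image.2 ⟨p, Finset.mem_filter.2 ⟨hp, Or.inr h⟩, ?_⟩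
  rw [if_neg]
  intro hc
  have hlt := T.lt p hp
  rw [hc, h] at hlt
  exact lt_irrefl _ hlt

lemma nbrs_elim {w : Fin (2 * n + 2)} (hw : w ∈ nbrsB n T k) :
    (∃ h1 : (1:ℕ) < 2*n+2, w = vtxB n k - ⟨1, h1⟩) ∨
    ∃ p ∈ T.diags, (p.1 = vtxB n k ∧ p.2 = w) ∨ (p.2 = vtxB n k ∧ p.1 = w) := by
  rcases Finset.mem_insert.1 hw with h | h
  · exact Or.inl ⟨by omega, h⟩
  · obtain ⟨p, hpf, hval⟩ := Finset.mem_image.1 h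
    obtain ⟨hp, hor⟩ := Finset.mem_filter.1 hpf
    right
    by_cases h1 : p.1 = vtxB n k
    · exact ⟨p, hp, Or.inl ⟨h1, by rw [if_pos h1] at hval; exact hval⟩⟩
    · exact ⟨p, hp, Or.inr ⟨hor.resolve_left h1, by rw [if_neg h1] at hval; exact hval⟩⟩

/-- key value of the endpoint of C_i -/
noncomputable def e (T : TriB n) (k : Fin n) : ℕ := kv n (endB n T k)

lemma endB_mem : endB n T k ∈ nbrsB n T k := by
  have h := Finset.min'_mem ((nbrsB n T k).image (keyB n))
    ((Finset.insert_nonempty _ _).image _)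
  obtain ⟨w, hw, hkw⟩ := Finset.mem_image.1 h
  show _ + startB n ∈ _
  rw [← hkw, keyB_add_start]
  exact hw

lemma e_le {w : Fin (2 * n + 2)} (hw : w ∈ nbrsB n T k) : e T k ≤ kv n w := by
  have h := Finset.min'_le ((nbrsB n T k).image (keyB n)) (keyB n w)
    (Finset.mem_image_of_mem _ hw)
  have h2 : e T k = ((((nbrsB n T k).image (keyB n)).min'
      ((Finset.insert_nonempty _ _).image _) : Fin (2*n+2)) : ℕ) := kv_add_start _
  rw [h2]
  exact h

lemma kv_vtx : kv n (vtxB n k) = (k : ℕ) + (n + 1) := by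
  have hval : ((vtxB n k : Fin (2*n+2)) : ℕ) = (k : ℕ) := rfl
  rcases kv_spec (vtxB n k) with ⟨h1, h2⟩ | ⟨h1, h2⟩ <;>
    (rw [hval] at h1 h2; have := k.isLt; omega)

lemma kv_pred (h1 : (1:ℕ) < 2*n+2) : kv n (vtxB n k - ⟨1, h1⟩) = (k : ℕ) + n := by
  have hv : ((vtxB n k - ⟨1, h1⟩ : Fin (2*n+2)) : ℕ)
      = if (k : ℕ) = 0 then 2*n+1 else (k:ℕ) - 1 := by
    rw [Fin.sub_def]
    show ((2*n+2) - 1 + (k:ℕ)) % (2*n+2) = _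
    rw [modN _ (by have := k.isLt; omega)]
    have := k.isLt
    split_ifs <;> omega
  rcases kv_spec (vtxB n k - ⟨1, h1⟩) with ⟨h2, h3⟩ | ⟨h2, h3⟩ <;>
    (rw [hv] at h2 h3; have := k.isLt; split_ifs at h2 h3 <;> omega)

lemma e_le_pred : e T k ≤ (k : ℕ) + n := by
  have := e_le (mem_nbrs_pred (T := T) (k := k) (by omega))
  rwa [kv_pred] at this

lemma e_lt : e T k < 2 * n + 2 := kv_lt _

lemma sub_val {x y : Fin (2 * n + 2)} (h : kv n y ≤ kv n x) :
    ((x - y : Fin (2 * n + 2)) : ℕ) = kv n x - kv n y := by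
  rw [Fin.sub_def]
  show ((2*n+2) - (y:ℕ) + (x:ℕ)) % (2*n+2) = _
  rcases kv_spec x with ⟨h1, h2⟩ | ⟨h1, h2⟩ <;> rcases kv_spec y with ⟨h3, h4⟩ | ⟨h3, h4⟩ <;>
    (have hx := x.isLt; have hy := y.isLt;
     rw [modN _ (by omega)]; split_ifs <;> omega)

lemma br_eq (h1 : (1:ℕ) < 2*n+2) :
    brB n T k = if (k:ℕ) + n - e T k ≤ n - 1
      then (((k:ℕ) + n - e T k : ℕ) : ℕ∞) else ⊤ := by
  have hval : ((vtxB n k - ⟨1, h1⟩ - endB n T k : Fin (2*n+2)) : ℕ)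
      = (k:ℕ) + n - e T k := by
    rw [sub_val (by rw [kv_pred]; exact e_le_pred), kv_pred]
    rfl
  show (if ((vtxB n k - ⟨1, _⟩ - endB n T k : Fin (2*n+2)) : ℕ) ≤ n - 1 then _ else _) = _
  rw [hval]


/-- A chord of `T` with key values `y1` and `y2` (unordered). -/
def KMem (T : TriB n) (y1 y2 : ℕ) : Prop :=
  ∃ p ∈ T.diags, (kv n p.1 = y1 ∧ kv n p.2 = y2) ∨ (kv n p.1 = y2 ∧ kv n p.2 = y1)

lemma KMem.symm' {y1 y2 : ℕ} (h : KMem T y1 y2) : KMem T y2 y1 := by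
  obtain ⟨p, hp, hc⟩ := h
  exact ⟨p, hp, hc.symm⟩

lemma KMem.lt {y1 y2 : ℕ} (h : KMem T y1 y2) : y1 < 2*n+2 ∧ y2 < 2*n+2 := by
  obtain ⟨p, hp, hc⟩ := h
  rcases hc with ⟨h1, h2⟩ | ⟨h1, h2⟩ <;> rw [← h1, ← h2] <;>
    exact ⟨kv_lt _, kv_lt _⟩

lemma kv_rot (w : Fin (2*n+2)) :
    kv n (rotB n w) = if kv n w ≤ n then kv n w + (n+1) else kv n w - (n+1) := by
  have h1 : rotB n w = w + startB n := rfl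
  rw [h1, kv_add_start]
  have hw := w.isLt
  rcases kv_spec w with ⟨h2, h3⟩ | ⟨h2, h3⟩ <;> rw [h3] <;> split_ifs <;> omega

lemma KMem.rot {y1 y2 : ℕ} (h : KMem T y1 y2) :
    KMem T (if y1 ≤ n then y1 + (n+1) else y1 - (n+1))
           (if y2 ≤ n then y2 + (n+1) else y2 - (n+1)) := by
  obtain ⟨p, hp, hc⟩ := h
  have hs := T.symm p hp
  have k1 := kv_rot (n := n) p.1
  have k2 := kv_rot (n := n) p.2
  by_cases hlt : rotB n p.1 < rotB n p.2
  · rw [if_pos hlt] at hs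
    rcases hc with ⟨h1, h2⟩ | ⟨h1, h2⟩
    · exact ⟨_, hs, Or.inl ⟨by rw [show kv n (rotB n p.1, rotB n p.2).1 = kv n (rotB n p.1) from rfl, k1, h1],
        by rw [show kv n (rotB n p.1, rotB n p.2).2 = kv n (rotB n p.2) from rfl, k2, h2]⟩⟩
    · exact ⟨_, hs, Or.inr ⟨by rw [show kv n (rotB n p.1, rotB n p.2).1 = kv n (rotB n p.1) from rfl, k1, h1],
        by rw [show kv n (rotB n p.1, rotB n p.2).2 = kv n (rotB n p.2) from rfl, k2, h2]⟩⟩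
  · rw [if_neg hlt] at hs
    rcases hc with ⟨h1, h2⟩ | ⟨h1, h2⟩
    · exact ⟨_, hs, Or.inr ⟨by rw [show kv n (rotB n p.2, rotB n p.1).1 = kv n (rotB n p.2) from rfl, k2, h2],
        by rw [show kv n (rotB n p.2, rotB n p.1).2 = kv n (rotB n p.1) from rfl, k1, h1]⟩⟩
    · exact ⟨_, hs, Or.inl ⟨by rw [show kv n (rotB n p.2, rotB n p.1).1 = kv n (rotB n p.2) from rfl, k2, h2],
        by rw [show kv n (rotB n p.2, rotB n p.1).2 = kv n (rotB n p.1) from rfl, k1, h1]⟩⟩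

/-- two chords of the same triangulation cannot interleave in key order -/
lemma knc {y1 y2 y3 y4 : ℕ} (h12 : y1 < y2) (h23 : y2 < y3) (h34 : y3 < y4)
    (m1 : KMem T y1 y3) (m2 : KMem T y2 y4) : False := by
  obtain ⟨p, hp, hc1⟩ := m1
  obtain ⟨q, hq, hc2⟩ := m2
  have lp := T.lt p hp
  have lq := T.lt q hq
  have n1 := T.noncross p hp q hq
  have n2 := T.noncross q hq p hp
  simp only [Fin.lt_def, not_and, not_lt] at lp lq n1 n2
  have s1 := kv_spec (n := n) p.1
  have s2 := kv_spec (n := n) p.2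
  have s3 := kv_spec (n := n) q.1
  have s4 := kv_spec (n := n) q.2
  have b1 := p.1.isLt; have b2 := p.2.isLt; have b3 := q.1.isLt; have b4 := q.2.isLt
  rcases hc1 with ⟨e1, e2⟩ | ⟨e1, e2⟩ <;> rcases hc2 with ⟨f1, f2⟩ | ⟨f1, f2⟩ <;>
    rcases s1 with ⟨u1, v1⟩ | ⟨u1, v1⟩ <;> rcases s2 with ⟨u2, v2⟩ | ⟨u2, v2⟩ <;>
    rcases s3 with ⟨u3, v3⟩ | ⟨u3, v3⟩ <;> rcases s4 with ⟨u4, v4⟩ | ⟨u4, v4⟩ <;>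
    omega


lemma e_le_of_KMem {y : ℕ} (h : KMem T y ((k : ℕ) + (n+1))) : e T k ≤ y := by
  obtain ⟨p, hp, hc⟩ := h
  rcases hc with ⟨h1, h2⟩ | ⟨h1, h2⟩
  · have hv : p.2 = vtxB n k := kv_inj (by rw [h2, kv_vtx])
    have := e_le (mem_nbrs_right hp hv)
    omega
  · have hv : p.1 = vtxB n k := kv_inj (by rw [h1, kv_vtx])
    have := e_le (mem_nbrs_left hp hv)
    omega

lemma le_e_of_inside {y1 y2 : ℕ} (h : KMem T y1 y2)
    (hy1 : y1 < (k : ℕ) + (n+1)) (hy2 : (k : ℕ) + (n+1) < y2) : y1 ≤ e T k := by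
  rcases nbrs_elim (endB_mem (T := T) (k := k)) with ⟨hh, hw⟩ | ⟨p, hp, hc⟩
  · have : e T k = (k : ℕ) + n := by
      show kv n (endB n T k) = _
      rw [hw, kv_pred]
    omega
  · by_contra hlt
    push_neg at hlt
    have hK2 : KMem T (e T k) ((k : ℕ) + (n+1)) := by
      rcases hc with ⟨h1, h2⟩ | ⟨h1, h2⟩
      · exact ⟨p, hp, Or.inr ⟨by rw [h1, kv_vtx], by rw [h2]; rfl⟩⟩
      · exact ⟨p, hp, Or.inl ⟨by rw [h2]; rfl, by rw [h1, kv_vtx]⟩⟩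
    exact knc hlt hy1 hy2 hK2 h

lemma br_compat {T' : TriB n} (h : ∀ k : Fin n, brB n T k = brB n T' k) (k : Fin n) :
    ((k : ℕ) + 1 ≤ e T k ∧ e T k = e T' k) ∨ (e T k ≤ (k : ℕ) ∧ e T' k ≤ (k : ℕ)) := by
  have hk := h k
  have hn : (1:ℕ) < 2*n+2 := by omega
  rw [br_eq hn, br_eq hn] at hk
  have h1 : e T k ≤ (k : ℕ) + n := e_le_pred
  have h2 : e T' k ≤ (k : ℕ) + n := e_le_pred
  have hkn := k.isLt
  split_ifs at hk with g1 g2 g2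
  · have := Nat.cast_inj (R := ℕ∞) |>.1 hk
    left
    omega
  · exact absurd hk (ENat.coe_ne_top _)
  · exact absurd hk.symm (ENat.coe_ne_top _)
  · right; omega

lemma kernel {A B : TriB n}
    (HB : ∀ k : Fin n, ((k : ℕ) + 1 ≤ e A k ∧ e A k = e B k) ∨ (e A k ≤ (k : ℕ) ∧ e B k ≤ (k : ℕ)))
    {x1 x2 x3 x4 : ℕ} (h12 : x1 < x2) (h23 : x2 < x3) (h34 : x3 < x4)
    (hl : n + 1 ≤ x3) (hu : x3 ≤ 2 * n) (hx2 : x3 - n ≤ x2)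
    (m1 : KMem A x1 x3) (m2 : KMem B x2 x4) : False := by
  set k : Fin n := ⟨x3 - (n+1), by omega⟩ with hkdef
  have hk : (k : ℕ) + (n+1) = x3 := by
    show x3 - (n+1) + (n+1) = x3
    omega
  have hkv : (k : ℕ) = x3 - (n+1) := rfl
  have h1 : e A k ≤ x1 := e_le_of_KMem (by rw [hk]; exact m1)
  have h2 : x2 ≤ e B k := le_e_of_inside m2 (by omega) (by omega)
  rcases HB k with ⟨g1, g2⟩ | ⟨g1, g2⟩ <;> omega


lemma crossK {A B : TriB n}
    (HB : ∀ k : Fin n, ((k : ℕ) + 1 ≤ e A k ∧ e A k = e B k) ∨ (e A k ≤ (k : ℕ) ∧ e B k ≤ (k : ℕ)))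
    {a b c d : ℕ} (hac : a < c) (hcb : c < b) (hbd : b < d)
    (mA : KMem A a b) (mB : KMem B c d) : False := by
  have HB' : ∀ k : Fin n, ((k : ℕ) + 1 ≤ e B k ∧ e B k = e A k) ∨ (e B k ≤ (k : ℕ) ∧ e A k ≤ (k : ℕ)) := by
    intro k
    rcases HB k with ⟨g1, g2⟩ | ⟨g1, g2⟩
    · exact Or.inl ⟨g2 ▸ g1, g2.symm⟩
    · exact Or.inr ⟨g2, g1⟩
  have hd2 : d < 2*n+2 := (KMem.lt mB).2
  by_cases hb : b ≤ n
  · by_cases hdn : d ≤ n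
    · -- both chords inside the low half: rotate both up
      have mA' := mA.rot
      rw [if_pos (by omega), if_pos (by omega)] at mA'
      have mB' := mB.rot
      rw [if_pos (by omega), if_pos (by omega)] at mB'
      exact kernel HB (x1 := a + (n+1)) (x2 := c + (n+1)) (x3 := b + (n+1)) (x4 := d + (n+1))
        (by omega) (by omega) (by omega) (by omega) (by omega) (by omega) mA' mB'
    · -- p low, q long
      have mA' := mA.rot
      rw [if_pos (by omega), if_pos (by omega)] at mA'
      have mB' := mB.rot
      rw [if_pos (by omega), if_neg (by omega)] at mB'
      exact kernel HB' (x1 := d - (n+1)) (x2 := a + (n+1)) (x3 := c + (n+1)) (x4 := b + (n+1))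
        (by omega) (by omega) (by omega) (by omega) (by omega) (by omega) mB'.symm' mA'
  · -- b ≥ n+1, so b is a bracket vertex
    have hb2 : b ≤ 2*n := by omega
    set k : Fin n := ⟨b - (n+1), by omega⟩ with hkdef
    have hk : (k : ℕ) + (n+1) = b := by
      show b - (n+1) + (n+1) = b
      omega
    have hkv : (k : ℕ) = b - (n+1) := rfl
    have h1 : e A k ≤ a := e_le_of_KMem (by rw [hk]; exact mA)
    have h2 : c ≤ e B k := le_e_of_inside mB (by omega) (by omega)
    rcases HB k with ⟨g1, g2⟩ | ⟨g1, g2⟩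
    · omega
    · -- hidden case: both chords super-long; rotate
      have hc : c ≤ b - (n+1) := by omega
      have mA' := mA.rot
      rw [if_pos (by omega), if_neg (by omega)] at mA'
      have mB' := mB.rot
      rw [if_pos (by omega), if_neg (by omega)] at mB'
      exact kernel HB (x1 := b - (n+1)) (x2 := d - (n+1)) (x3 := a + (n+1)) (x4 := c + (n+1))
        (by omega) (by omega) (by omega) (by omega) (by omega) (by omega) mA'.symm' mB'.symm'


set_option maxHeartbeats 1000000 in
lemma fwd {p1 p2 q1 q2 : Fin (2*n+2)} (hp : p1 < p2) (hq : q1 < q2)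
    (h1 : p1 < q1) (h2 : q1 < p2) (h3 : p2 < q2) :
    (kv n p1 < kv n q1 ∧ kv n q1 < kv n p2 ∧ kv n p2 < kv n q2) ∨
    (kv n p1 < kv n q2 ∧ kv n q2 < kv n p2 ∧ kv n p2 < kv n q1) ∨
    (kv n p2 < kv n q1 ∧ kv n q1 < kv n p1 ∧ kv n p1 < kv n q2) ∨
    (kv n p2 < kv n q2 ∧ kv n q2 < kv n p1 ∧ kv n p1 < kv n q1) ∨
    (kv n q1 < kv n p1 ∧ kv n p1 < kv n q2 ∧ kv n q2 < kv n p2) ∨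
    (kv n q2 < kv n p1 ∧ kv n p1 < kv n q1 ∧ kv n q1 < kv n p2) ∨
    (kv n q1 < kv n p2 ∧ kv n p2 < kv n q2 ∧ kv n q2 < kv n p1) ∨
    (kv n q2 < kv n p2 ∧ kv n p2 < kv n q1 ∧ kv n q1 < kv n p1) := by
  simp only [Fin.lt_def] at hp hq h1 h2 h3
  have s1 := kv_spec (n := n) p1
  have s2 := kv_spec (n := n) p2
  have s3 := kv_spec (n := n) q1
  have s4 := kv_spec (n := n) q2
  have b1 := p1.isLt; have b2 := p2.isLt; have b3 := q1.isLt; have b4 := q2.isLt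
  rcases s1 with ⟨u1, v1⟩ | ⟨u1, v1⟩ <;> rcases s2 with ⟨u2, v2⟩ | ⟨u2, v2⟩ <;>
    rcases s3 with ⟨u3, v3⟩ | ⟨u3, v3⟩ <;> rcases s4 with ⟨u4, v4⟩ | ⟨u4, v4⟩ <;>
    first
      | exact Or.inl (by omega)
      | exact Or.inr (Or.inl (by omega))
      | exact Or.inr (Or.inr (Or.inl (by omega)))
      | exact Or.inr (Or.inr (Or.inr (Or.inl (by omega))))
      | exact Or.inr (Or.inr (Or.inr (Or.inr (Or.inl (by omega)))))
      | exact Or.inr (Or.inr (Or.inr (Or.inr (Or.inr (Or.inl (by omega))))))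
      | exact Or.inr (Or.inr (Or.inr (Or.inr (Or.inr (Or.inr (Or.inl (by omega)))))))
      | exact Or.inr (Or.inr (Or.inr (Or.inr (Or.inr (Or.inr (Or.inr (by omega)))))))

lemma no_cross {T T' : TriB n} (h : ∀ k : Fin n, brB n T k = brB n T' k)
    {p q : Fin (2*n+2) × Fin (2*n+2)} (hp : p ∈ T.diags) (hq : q ∈ T'.diags)
    (h1 : p.1 < q.1) (h2 : q.1 < p.2) (h3 : p.2 < q.2) : False := by
  have HB := br_compat h
  have HB' : ∀ k : Fin n, ((k : ℕ) + 1 ≤ e T' k ∧ e T' k = e T k) ∨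
      (e T' k ≤ (k : ℕ) ∧ e T k ≤ (k : ℕ)) := by
    intro k
    rcases HB k with ⟨g1, g2⟩ | ⟨g1, g2⟩
    · exact Or.inl ⟨g2 ▸ g1, g2.symm⟩
    · exact Or.inr ⟨g2, g1⟩
  have mp : KMem T (kv n p.1) (kv n p.2) := ⟨p, hp, Or.inl ⟨rfl, rfl⟩⟩
  have mq : KMem T' (kv n q.1) (kv n q.2) := ⟨q, hq, Or.inl ⟨rfl, rfl⟩⟩
  rcases fwd (T.lt p hp) (T'.lt q hq) h1 h2 h3 with
    ⟨g1,g2,g3⟩|⟨g1,g2,g3⟩|⟨g1,g2,g3⟩|⟨g1,g2,g3⟩|⟨g1,g2,g3⟩|⟨g1,g2,g3⟩|⟨g1,g2,g3⟩|⟨g1,g2,g3⟩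
  · exact crossK HB g1 g2 g3 mp mq
  · exact crossK HB g1 g2 g3 mp mq.symm'
  · exact crossK HB g1 g2 g3 mp.symm' mq
  · exact crossK HB g1 g2 g3 mp.symm' mq.symm'
  · exact crossK HB' g1 g2 g3 mq mp
  · exact crossK HB' g1 g2 g3 mq.symm' mp
  · exact crossK HB' g1 g2 g3 mq mp.symm'
  · exact crossK HB' g1 g2 g3 mq.symm' mp.symm'

lemma diags_subset {T T' : TriB n} (h : ∀ k : Fin n, brB n T k = brB n T' k) :
    T.diags ⊆ T'.diags := by
  intro p hp
  apply T'.maximal p (T.lt p hp) (T.isDiag p hp)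
  intro q hq
  constructor
  · rintro ⟨h1, h2, h3⟩
    exact no_cross h hp hq h1 h2 h3
  · rintro ⟨h1, h2, h3⟩
    exact no_cross (fun k => (h k).symm) hq hp h1 h2 h3

end BrBAux

/-- The map from centrally symmetric triangulations of a `(2n+2)`-gon to their
bracket vectors is injective. -/
theorem brB_injective (n : ℕ) (T T' : TriB n)
    (h : ∀ k : Fin n, brB n T k = brB n T' k) : T = T' := by
  have h1 := BrBAux.diags_subset h
  have h2 := BrBAux.diags_subset (fun k => (h k).symm)
  have hd : T.diags = T'.diags := Finset.Subset.antisymm h1 h2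
  cases T; cases T'
  simp only [TriB.mk.injEq]
  exact hd
end

section
/- In the type B_n Tamari lattice, the elements S_{i,t} (for 1 ≤ i ≤ n and t ∈ {1,...,n-1,∞}) whose bracket vector has entries 0 in positions before i, t in position i, and ∞ in positions after i, are left modular: for all Y < Z in the lattice, (Y ∨ S_{i,t}) ∧ Z = Y ∨ (S_{i,t} ∧ Z). -/
/-- `u` is the join (least upper bound) of `a` and `b` in the type `B_n`
Tamari lattice of bracket vectors (componentwise order). -/
def isJoinB (n : ℕ) (a b u : Fin n → ℕ∞) : Prop :=
  isBVec n u ∧ a ≤ u ∧ b ≤ u ∧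
    ∀ h : Fin n → ℕ∞, isBVec n h → a ≤ h → b ≤ h → u ≤ h

/-- `m` is the meet (greatest lower bound) of `a` and `b` in the type `B_n`
Tamari lattice of bracket vectors (componentwise order). -/
def isMeetB (n : ℕ) (a b m : Fin n → ℕ∞) : Prop :=
  isBVec n m ∧ m ≤ a ∧ m ≤ b ∧
    ∀ h : Fin n → ℕ∞, isBVec n h → h ≤ a → h ≤ b → h ≤ m

/-- The element `S_{i,t}` (0-based index `k`, so `i = k + 1`): bracket vector
with `0` in positions before `k`, `t` in position `k`, and `∞` after. -/
def Sel (n : ℕ) (k : Fin n) (t : ℕ∞) : Fin n → ℕ∞ := fun j =>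
  if j < k then 0 else if j = k then t else ⊤

/-- `x` is left modular in the type `B_n` Tamari lattice:
`(Y ∨ x) ∧ Z = Y ∨ (x ∧ Z)` for all `Y < Z`. -/
def leftModB (n : ℕ) (x : Fin n → ℕ∞) : Prop :=
  ∀ Y Z : Fin n → ℕ∞, isBVec n Y → isBVec n Z → Y < Z →
    ∀ J M A B : Fin n → ℕ∞,
      isJoinB n Y x J → isMeetB n x Z M →
      isMeetB n J Z A → isJoinB n Y M B → A = B

/-!
Write `x = S_{k,t}`, `J = Y ∨ x`, `M = x ∧ Z`, `A = J ∧ Z`, `B = Y ∨ M`; the inequality `B ≤ A`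
holds in every lattice. For `A ≤ B` we test `J` and `M` against two explicit bracket vectors:
`topAfter k Y c` (`Y` before `k`, then `c`, then `∞`) lies above `Y` and `x`, and
`zeroBefore k Z c` (`0` before `k`, then `c`, then `Z`) lies below `x` and `Z`, for suitable `c`.
With `c = ∞`, resp. `c = 0`, these give `J ≤ Y` before `k` and `Z ≤ M` after `k`, which settles
every coordinate except `k`. There one compares `A k`, `B k` with `t`: if `A k ≤ t` take
`zeroBefore k Z (A k)`, if `t ≤ B k` take `topAfter k Y (B k)`. Otherwise `B k = b < t < A k`;
then `k ≤ b` makes `topAfter k Y t` admissible, condition (i) at `k` being inherited from `B`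
(so `A k ≤ J k ≤ t`), while `b < k` makes `zeroBefore k Z (b + 1)` admissible, condition (ii)
being vacuous there (so `b + 1 ≤ M k ≤ b`).
-/

section

variable {n : ℕ}

lemma le_pred_of_entry {c : ℕ∞} {s : ℕ} (hc : c = ⊤ ∨ c ≤ ((n - 1 : ℕ) : ℕ∞)) (hs : c = s) :
    s ≤ n - 1 := by
  rcases hc with hc | hc
  · simp [hs] at hc
  · exact_mod_cast hs ▸ hc

def topAfter (k : Fin n) (Y : Fin n → ℕ∞) (c : ℕ∞) : Fin n → ℕ∞ :=
  fun j => if j < k then Y j else if j = k then c else ⊤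

def zeroBefore (k : Fin n) (Z : Fin n → ℕ∞) (c : ℕ∞) : Fin n → ℕ∞ :=
  fun j => if j < k then 0 else if j = k then c else Z j

variable {k j : Fin n} {Y Z : Fin n → ℕ∞} {c t : ℕ∞}

@[simp] lemma topAfter_of_lt (h : j < k) : topAfter k Y c j = Y j := if_pos h

@[simp] lemma topAfter_self : topAfter k Y c k = c := by simp [topAfter]

@[simp] lemma topAfter_of_gt (h : k < j) : topAfter k Y c j = ⊤ := by
  simp [topAfter, h.not_gt, h.ne']

@[simp] lemma zeroBefore_of_lt (h : j < k) : zeroBefore k Z c j = 0 := if_pos h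

@[simp] lemma zeroBefore_self : zeroBefore k Z c k = c := by simp [zeroBefore]

@[simp] lemma zeroBefore_of_gt (h : k < j) : zeroBefore k Z c j = Z j := by
  simp [zeroBefore, h.not_gt, h.ne']

lemma le_topAfter (hYc : Y k ≤ c) : Y ≤ topAfter k Y c := by
  intro j
  rcases lt_trichotomy j k with hj | rfl | hj <;> simp [*]

lemma Sel_le_topAfter (htc : t ≤ c) : Sel n k t ≤ topAfter k Y c := by
  intro j
  rcases lt_trichotomy j k with hj | rfl | hj
  · simp [Sel, hj]
  · simpa [Sel]
  · simp [Sel, hj, hj.not_gt, hj.ne']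

lemma zeroBefore_le (hcZ : c ≤ Z k) : zeroBefore k Z c ≤ Z := by
  intro j
  rcases lt_trichotomy j k with hj | rfl | hj <;> simp [*]

lemma zeroBefore_le_Sel (hct : c ≤ t) : zeroBefore k Z c ≤ Sel n k t := by
  intro j
  rcases lt_trichotomy j k with hj | rfl | hj
  · simp [Sel, hj]
  · simpa [Sel]
  · simp [Sel, hj, hj.not_gt, hj.ne']

lemma topAfter_eq_top (hYc : Y k ≤ c) (hj : Y j = ⊤) : topAfter k Y c j = ⊤ :=
  top_le_iff.mp (hj ▸ le_topAfter hYc j)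

lemma isBVec_topAfter (hY : isBVec n Y) (hYc : Y k ≤ c)
    (hc : c = ⊤ ∨ c ≤ ((n - 1 : ℕ) : ℕ∞))
    (hck : ∀ i < k, (((k : ℕ) - (i : ℕ) : ℕ) : ℕ∞) ≤ c →
      Y i + (((k : ℕ) - (i : ℕ) : ℕ) : ℕ∞) ≤ c) :
    isBVec n (topAfter k Y c) := by
  obtain ⟨hYe, hYi, hYii⟩ := hY
  refine ⟨fun j => ?_, fun i j hij => ?_, fun j s hs hjs => ?_⟩
  · rcases lt_trichotomy j k with hj | rfl | hj
    · simpa [hj] using hYe j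
    · simpa using hc
    · simp [hj]
  · rcases lt_trichotomy j k with hj | rfl | hj
    · simpa [hj, hij.trans hj] using hYi i j hij
    · simpa [hij] using hck i hij
    · simp [hj]
  · rcases lt_trichotomy j k with hj | rfl | hj
    · rw [topAfter_of_lt hj] at hs
      exact topAfter_eq_top hYc (hYii j s hs hjs)
    · rw [topAfter_self] at hs
      have hsn := le_pred_of_entry hc hs
      exact topAfter_of_gt (by rw [Fin.lt_def]; dsimp only; omega)
    · simp [hj] at hs

lemma isBVec_zeroBefore (hZ : isBVec n Z) (hcZ : c ≤ Z k)
    (hc : c = ⊤ ∨ c ≤ ((n - 1 : ℕ) : ℕ∞))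
    (hck : ∀ s : ℕ, c = s → ∀ _hs : (k : ℕ) + 1 ≤ s,
      Z ⟨n + (k : ℕ) - s, by have := k.isLt; omega⟩ = ⊤) :
    isBVec n (zeroBefore k Z c) := by
  obtain ⟨hZe, hZi, hZii⟩ := hZ
  refine ⟨fun j => ?_, fun i j hij hd => ?_, fun j s hs hjs => ?_⟩
  · rcases lt_trichotomy j k with hj | rfl | hj
    · simp [hj]
    · simpa using hc
    · simpa [hj] using hZe j
  · rcases lt_trichotomy j k with hj | rfl | hj
    · simp only [zeroBefore_of_lt hj, nonpos_iff_eq_zero, Nat.cast_eq_zero] at hd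
      exact absurd hd (by rw [Fin.lt_def] at hij; omega)
    · simpa [hij] using hd
    · rw [zeroBefore_of_gt hj] at hd ⊢
      exact (add_le_add_left (zeroBefore_le hcZ i) _).trans (hZi i j hij hd)
  · rcases lt_trichotomy j k with hj | rfl | hj
    · rw [zeroBefore_of_lt hj] at hs
      have : s = 0 := by exact_mod_cast hs.symm
      omega
    · rw [zeroBefore_self] at hs
      have hsn := le_pred_of_entry hc hs
      rw [zeroBefore_of_gt (by rw [Fin.lt_def]; dsimp only; omega)]
      exact hck s hs hjs
    · rw [zeroBefore_of_gt hj] at hs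
      have hsn := le_pred_of_entry (hZe j) hs
      rw [zeroBefore_of_gt (by rw [Fin.lt_def] at hj ⊢; dsimp only; omega)]
      exact hZii j s hs hjs

variable {J M : Fin n → ℕ∞}

lemma isJoinB.apply_le (hJ : isJoinB n Y (Sel n k t) J) (hY : isBVec n Y) (hYc : Y k ≤ c)
    (htc : t ≤ c) (hc : c = ⊤ ∨ c ≤ ((n - 1 : ℕ) : ℕ∞))
    (hck : ∀ i < k, (((k : ℕ) - (i : ℕ) : ℕ) : ℕ∞) ≤ c →
      Y i + (((k : ℕ) - (i : ℕ) : ℕ) : ℕ∞) ≤ c) :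
    J k ≤ c := by
  simpa using hJ.2.2.2 _ (isBVec_topAfter hY hYc hc hck) (le_topAfter hYc)
    (Sel_le_topAfter htc) k

lemma isJoinB.apply_le_of_lt (hJ : isJoinB n Y (Sel n k t) J) (hY : isBVec n Y) (hj : j < k) :
    J j ≤ Y j := by
  simpa [hj] using hJ.2.2.2 _ (isBVec_topAfter hY le_top (.inl rfl) fun _ _ _ => le_top)
    (le_topAfter le_top) (Sel_le_topAfter le_top) j

lemma isMeetB.le_apply (hM : isMeetB n (Sel n k t) Z M) (hZ : isBVec n Z) (hcZ : c ≤ Z k)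
    (hct : c ≤ t) (hc : c = ⊤ ∨ c ≤ ((n - 1 : ℕ) : ℕ∞))
    (hck : ∀ s : ℕ, c = s → ∀ _hs : (k : ℕ) + 1 ≤ s,
      Z ⟨n + (k : ℕ) - s, by have := k.isLt; omega⟩ = ⊤) :
    c ≤ M k := by
  simpa using hM.2.2.2 _ (isBVec_zeroBefore hZ hcZ hc hck) (zeroBefore_le_Sel hct)
    (zeroBefore_le hcZ) k

lemma isMeetB.le_apply_of_gt (hM : isMeetB n (Sel n k t) Z M) (hZ : isBVec n Z) (hj : k < j) :
    Z j ≤ M j := by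
  have hck (s : ℕ) (hs : (0 : ℕ∞) = s) (hks : (k : ℕ) + 1 ≤ s) :
      Z ⟨n + (k : ℕ) - s, by have := k.isLt; omega⟩ = ⊤ := by
    have : s = 0 := by exact_mod_cast hs.symm
    omega
  simpa [hj] using hM.2.2.2 _ (isBVec_zeroBefore hZ zero_le (.inr zero_le) hck)
    (zeroBefore_le_Sel zero_le) (zeroBefore_le zero_le) j

variable {A B : Fin n → ℕ∞}

lemma meetJoin_apply_self_le (hY : isBVec n Y) (hZ : isBVec n Z)
    (ht : t = ⊤ ∨ t ≤ ((n - 1 : ℕ) : ℕ∞))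
    (hJ : isJoinB n Y (Sel n k t) J) (hM : isMeetB n (Sel n k t) Z M)
    (hA : isMeetB n J Z A) (hB : isJoinB n Y M B) (hBA : B ≤ A) : A k ≤ B k := by
  obtain ⟨hAvec, hAJ, hAZ, -⟩ := hA
  obtain ⟨hBvec, hYB, hMB, -⟩ := hB
  have hBY (i : Fin n) (hi : i < k) : B i = Y i :=
    le_antisymm ((hBA i).trans ((hAJ i).trans (hJ.apply_le_of_lt hY hi))) (hYB i)
  have hYBk (i : Fin n) (hi : i < k) (hd : (((k : ℕ) - (i : ℕ) : ℕ) : ℕ∞) ≤ B k) :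
      Y i + (((k : ℕ) - (i : ℕ) : ℕ) : ℕ∞) ≤ B k :=
    hBY i hi ▸ hBvec.2.1 i k hi hd
  by_cases hAt : A k ≤ t
  · refine (hM.le_apply hZ (hAZ k) hAt (hAvec.1 k) fun s hs hks => ?_).trans (hMB k)
    exact top_le_iff.mp (hAvec.2.2 k s hs hks ▸ hAZ _)
  by_cases htB : t ≤ B k
  · exact (hAJ k).trans (hJ.apply_le hY (hYB k) htB (hBvec.1 k) hYBk)
  push Not at hAt htB
  obtain ⟨b, hb⟩ := ENat.ne_top_iff_exists.mp (ne_top_of_lt htB)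
  by_cases hkb : (k : ℕ) ≤ b
  · have hJt : J k ≤ t := hJ.apply_le hY ((hYB k).trans htB.le) le_rfl ht fun i hi _ =>
      (hYBk i hi (hb ▸ by exact_mod_cast (Nat.sub_le _ _).trans hkb)).trans htB.le
    exact absurd ((hAJ k).trans hJt) hAt.not_ge
  · have hbt : ((b + 1 : ℕ) : ℕ∞) ≤ t := by
      rw [← hb] at htB; exact_mod_cast ENat.natCast_add_one_le_iff.mpr htB
    have hbM : ((b + 1 : ℕ) : ℕ∞) ≤ M k :=
      hM.le_apply hZ (hbt.trans (hAt.le.trans (hAZ k))) hbt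
        (.inr (by have := k.isLt; exact_mod_cast (by omega : b + 1 ≤ n - 1)))
        fun s hs hks => absurd (by exact_mod_cast hs : b + 1 = s) (by omega)
    have : b + 1 ≤ b := by exact_mod_cast hb ▸ hbM.trans (hMB k)
    omega

end

theorem Sel_leftModular_general (n : ℕ) (k : Fin n) (t : ℕ∞)
    (ht2 : t = ⊤ ∨ t ≤ ((n - 1 : ℕ) : ℕ∞)) :
    leftModB n (Sel n k t) := by
  intro Y Z hY hZ hYZ J M A B hJ hM hA hB
  have hYA : Y ≤ A := hA.2.2.2 Y hY hJ.2.1 hYZ.le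
  have hMA : M ≤ A := hA.2.2.2 M hM.1 (hM.2.1.trans hJ.2.2.1) hM.2.2.1
  have hBA : B ≤ A := hB.2.2.2 A hA.1 hYA hMA
  refine le_antisymm (fun j => ?_) hBA
  rcases lt_trichotomy j k with hj | rfl | hj
  · exact (hA.2.1 j).trans ((hJ.apply_le_of_lt hY hj).trans (hB.2.1 j))
  · exact meetJoin_apply_self_le hY hZ ht2 hJ hM hA hB hBA
  · exact (hA.2.2.1 j).trans ((hM.le_apply_of_gt hZ hj).trans (hB.2.2.1 j))

/-- The elements `S_{i,t}` (for `1 ≤ i ≤ n` and `t ∈ {1,…,n-1,∞}`) are left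
modular in the type `B_n` Tamari lattice. -/
theorem Sel_leftModular (n : ℕ) (k : Fin n) (t : ℕ∞)
    (ht1 : 1 ≤ t) (ht2 : t = ⊤ ∨ t ≤ ((n - 1 : ℕ) : ℕ∞)) :
    leftModB n (Sel n k t) :=
  Sel_leftModular_general n k t ht2
end

section
/- The join irreducibles of the type B_n Tamari lattice are exactly the elements W_{i,t} defined by: for 1 ≤ t ≤ i-1, the vector with t in position i and 0 elsewhere; for i ≤ t < n, the vector with t in position i, ∞ in position n+i-t, and 0 elsewhere; and W_{i,∞}, the vector with ∞ in position i and 0 elsewhere. Moreover every element of the lattice is the join of the join irreducibles below it. -/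
/-- The candidate join irreducibles `W_{i,t}` (0-based index `k`, so `i = k+1`):
`t` in position `k`; additionally `∞` in position `n + i - t - 1` (0-based
`n + k - t`) when `i ≤ t < n`; `0` elsewhere.  (When `t = ∞` or `t ≤ i - 1`
the extra `∞` entry does not occur.) -/
noncomputable def Wvec (n : ℕ) (k : Fin n) (t : ℕ∞) : Fin n → ℕ∞ := fun j =>
  if j = k then t
  else if t ≠ ⊤ ∧ (k : ℕ) + 1 ≤ t.toNat ∧ (j : ℕ) = n + (k : ℕ) - t.toNat then ⊤
  else 0

/-- `r` is join irreducible in the type `B_n` Tamari lattice: it is not the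
bottom element (the zero vector) and is not the join of two strictly smaller
elements. -/
def joinIrredB (n : ℕ) (r : Fin n → ℕ∞) : Prop :=
  isBVec n r ∧ r ≠ (fun _ => 0) ∧
    ∀ a b : Fin n → ℕ∞, isBVec n a → isBVec n b → a < r → b < r →
      ∃ h : Fin n → ℕ∞, isBVec n h ∧ a ≤ h ∧ b ≤ h ∧ ¬r ≤ h

/-! The vectors `W_{k, r_k}` with `r_k ≠ 0` sit below a bracket vector `r` and already determine
it coordinatewise, which gives the second claim once the `W_{k,t}` are known to be join
irreducible. For that, if `a, b < W_{k,t}` then both vanish before `k` and are smaller than `t`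
at `k`, so they lie below the vector that is `0` before `k`, `max (a_k, b_k)` at `k` and `∞`
after it, which is not above `W_{k,t}`. Conversely, if `k` is the first nonzero position of a
join irreducible `r`, then `r` is the join of `W_{k, r_k}` and `r` with position `k` reset to
`0`, so it must equal `W_{k, r_k}`. -/

open Function

section BracketVectors

variable {n : ℕ}

def stepVec (n : ℕ) (k : Fin n) (s : ℕ∞) : Fin n → ℕ∞ := fun j =>
  if j < k then 0 else if j = k then s else ⊤

lemma isBVec_of_eq_zero_of_lt {r : Fin n → ℕ∞} (k : Fin n) (hbelow : ∀ j < k, r j = 0)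
    (habove : ∀ j, k < j → r j = 0 ∨ r j = ⊤) (hk : r k = ⊤ ∨ r k ≤ ((n - 1 : ℕ) : ℕ∞))
    (hcomp : ∀ (t : ℕ) (j : Fin n), r k = t → (k : ℕ) + 1 ≤ t → (j : ℕ) = n + k - t →
      r j = ⊤) :
    isBVec n r := by
  have hzero_or_top : ∀ j ≠ k, r j = 0 ∨ r j = ⊤ := fun j hj =>
    (lt_or_gt_of_ne hj).elim (fun h => .inl (hbelow j h)) (habove j)
  refine ⟨fun j => ?_, fun i j hij hle => ?_, fun k' t hk' ht => ?_⟩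
  · rcases eq_or_ne j k with rfl | hj
    · exact hk
    · exact (hzero_or_top j hj).symm.imp_right fun h => by simp [h]
  · have hij' : (i : ℕ) < j := hij
    rcases eq_or_ne j k with rfl | hj
    · rw [hbelow i hij, zero_add]
      exact hle
    · rcases hzero_or_top j hj with h | h
      · rw [h, nonpos_iff_eq_zero, Nat.cast_eq_zero] at hle
        omega
      · simp [h]
  · rcases eq_or_ne k' k with rfl | hk''
    · exact hcomp t _ hk' ht rfl
    · rcases hzero_or_top k' hk'' with h | h <;> rw [h] at hk'
      · norm_cast at hk'
        omega
      · simp at hk'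

lemma stepVec_isBVec (k : Fin n) {s : ℕ∞} (hs : s = ⊤ ∨ s ≤ ((n - 1 : ℕ) : ℕ∞)) :
    isBVec n (stepVec n k s) := by
  refine isBVec_of_eq_zero_of_lt k (fun j hj => if_pos hj) (fun j hj => ?_) ?_ ?_
  · simp [stepVec, hj.not_gt, hj.ne']
  · simpa [stepVec] using hs
  · intro t j hkt ht hj
    simp only [stepVec, lt_irrefl, if_false, if_true] at hkt
    have htn : t ≤ n - 1 := by
      rcases hs with h | h
      · simp [h] at hkt
      · rw [hkt] at h; exact_mod_cast h
    have hkj : k < j := by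
      change (k : ℕ) < j
      omega
    simp [stepVec, hkj.not_gt, hkj.ne']

lemma le_stepVec {r : Fin n → ℕ∞} {k : Fin n} {s : ℕ∞} (hbelow : ∀ j < k, r j = 0)
    (hk : r k ≤ s) : r ≤ stepVec n k s := by
  intro j
  rcases lt_trichotomy j k with hj | rfl | hj
  · simp [hbelow j hj]
  · simpa [stepVec] using hk
  · simp [stepVec, hj.not_gt, hj.ne']

lemma Wvec_apply_of_lt {k j : Fin n} {t : ℕ∞} (ht : t = ⊤ ∨ t ≤ ((n - 1 : ℕ) : ℕ∞))
    (hj : j < k) : Wvec n k t j = 0 := by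
  have hj' : (j : ℕ) < k := hj
  rcases ht with rfl | ht
  · simp [Wvec, hj.ne]
  · have : t.toNat ≤ n - 1 := ENat.toNat_le_of_le_natCast ht
    simp only [Wvec, hj.ne, if_false, ite_eq_right_iff]
    omega

lemma Wvec_isBVec (k : Fin n) {t : ℕ∞} (ht : t = ⊤ ∨ t ≤ ((n - 1 : ℕ) : ℕ∞)) :
    isBVec n (Wvec n k t) := by
  refine isBVec_of_eq_zero_of_lt k (fun j hj => Wvec_apply_of_lt ht hj)
    (fun j hj => ?_) (by simpa [Wvec] using ht) ?_
  · simp only [Wvec, hj.ne', if_false]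
    split_ifs <;> simp
  · intro t' j hkt ht' hj
    simp only [Wvec, if_true] at hkt
    subst hkt
    have htn : t' ≤ n - 1 := by
      rcases ht with h | h
      · simp at h
      · exact_mod_cast h
    have hjk : j ≠ k := by
      rintro rfl
      omega
    simp [Wvec, hjk]
    omega

lemma Wvec_le {r : Fin n → ℕ∞} (hr : isBVec n r) (k : Fin n) : Wvec n k (r k) ≤ r := by
  intro j
  by_cases hjk : j = k
  · simp [Wvec, hjk]
  simp only [Wvec, hjk, if_false]
  split_ifs with hcomp
  · obtain ⟨hne, hlt, hj⟩ := hcomp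
    have := hr.2.2 k _ (ENat.natCast_toNat hne).symm hlt
    rw [← Fin.ext (a := j) (b := ⟨_, _⟩) hj] at this
    exact this.ge
  · exact zero_le

lemma apply_lt_of_lt_Wvec {a : Fin n → ℕ∞} (ha : isBVec n a) {k : Fin n} {t : ℕ∞}
    (hlt : a < Wvec n k t) : a k < t := by
  refine (by simpa [Wvec] using hlt.le k : a k ≤ t).lt_of_ne fun hak => hlt.ne ?_
  exact le_antisymm hlt.le (hak ▸ Wvec_le ha k)

lemma Wvec_joinIrredB (k : Fin n) {t : ℕ∞} (ht0 : t ≠ 0)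
    (ht : t = ⊤ ∨ t ≤ ((n - 1 : ℕ) : ℕ∞)) : joinIrredB n (Wvec n k t) := by
  refine ⟨Wvec_isBVec k ht, fun h => ht0 (by simpa [Wvec] using congrFun h k),
    fun a b ha hb haW hbW => ⟨stepVec n k (a k ⊔ b k), ?_, ?_, ?_, fun hle => ?_⟩⟩
  · have hfin {c : Fin n → ℕ∞} (hc : isBVec n c) (hcW : c < Wvec n k t) :
        c k ≤ ((n - 1 : ℕ) : ℕ∞) :=
      (hc.1 k).resolve_left (apply_lt_of_lt_Wvec hc hcW).ne_top
    exact stepVec_isBVec k (.inr (sup_le (hfin ha haW) (hfin hb hbW)))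
  · exact le_stepVec (fun j hj => le_antisymm ((haW.le j).trans_eq (Wvec_apply_of_lt ht hj))
      zero_le) le_sup_left
  · exact le_stepVec (fun j hj => le_antisymm ((hbW.le j).trans_eq (Wvec_apply_of_lt ht hj))
      zero_le) le_sup_right
  · have := hle k
    simp only [Wvec, stepVec, lt_irrefl, if_false, if_true] at this
    exact (sup_lt_iff.2 ⟨apply_lt_of_lt_Wvec ha haW, apply_lt_of_lt_Wvec hb hbW⟩).not_ge this

lemma update_zero_isBVec {r : Fin n → ℕ∞} (hr : isBVec n r) {k : Fin n}
    (hbelow : ∀ j < k, r j = 0) : isBVec n (update r k 0) := by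
  have hle : update r k 0 ≤ r := fun j => by
    rcases eq_or_ne j k with rfl | hj
    · simp
    · simp [hj]
  refine ⟨fun j => ?_, fun i j hij hij_le => ?_, fun k' t hk't ht => ?_⟩
  · rcases eq_or_ne j k with rfl | hj
    · simp
    · simpa [hj] using hr.1 j
  · have hij' : (i : ℕ) < j := hij
    rcases eq_or_ne j k with rfl | hj
    · rw [update_self, nonpos_iff_eq_zero, Nat.cast_eq_zero] at hij_le
      omega
    · rw [update_of_ne hj] at hij_le ⊢
      exact (add_le_add_left (hle i) _).trans (hr.2.1 i j hij hij_le)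
  · have hk' : k' ≠ k := by
      rintro rfl
      simp only [update_self] at hk't
      norm_cast at hk't
      omega
    rw [update_of_ne hk'] at hk't
    have htn : t ≤ n - 1 := by
      rcases hr.1 k' with h | h <;> rw [hk't] at h
      · simp at h
      · exact_mod_cast h
    have hkk' : (k : ℕ) ≤ k' := by
      by_contra! h
      rw [hbelow k' h] at hk't
      norm_cast at hk't
      omega
    rw [update_of_ne (fun h => by have := congrArg Fin.val h; simp at this; omega)]
    exact hr.2.2 k' t hk't ht

lemma joinIrredB.exists_eq_Wvec {r : Fin n → ℕ∞} (hr : joinIrredB n r) :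
    ∃ k, r k ≠ 0 ∧ r = Wvec n k (r k) := by
  obtain ⟨hB, hr0, hirr⟩ := hr
  obtain ⟨k, hk, hmin⟩ := wellFounded_lt.has_min {k | r k ≠ 0}
    (not_forall.1 fun h => hr0 (funext h))
  have hbelow : ∀ j < k, r j = 0 := fun j hj => by_contra fun h => hmin j h hj
  refine ⟨k, hk, by_contra fun hne => ?_⟩
  have hupdate_lt : update r k 0 < r := by
    refine lt_of_le_of_ne (fun j => ?_) fun h => hk (by simpa using (congrFun h k).symm)
    rcases eq_or_ne j k with rfl | hj
    · simp
    · simp [hj]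
  -- `r` is the pointwise maximum of `W_{k, r_k}` and `r` with position `k` reset to `0`.
  obtain ⟨h, -, hWh, hupdate_h, hrh⟩ := hirr _ _ (Wvec_isBVec k (hB.1 k))
    (update_zero_isBVec hB hbelow) ((Wvec_le hB k).lt_of_ne (Ne.symm hne)) hupdate_lt
  refine hrh fun j => ?_
  rcases eq_or_ne j k with rfl | hj
  · simpa [Wvec] using hWh j
  · simpa [hj] using hupdate_h j

lemma le_of_forall_joinIrredB_le {r h : Fin n → ℕ∞} (hr : isBVec n r)
    (hle : ∀ w, joinIrredB n w → w ≤ r → w ≤ h) : r ≤ h := by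
  intro j
  rcases eq_or_ne (r j) 0 with h0 | h0
  · simp [h0]
  · simpa [Wvec] using hle _ (Wvec_joinIrredB j h0 (hr.1 j)) (Wvec_le hr j) j

lemma Wvec_params_iff (k : Fin n) (t : ℕ∞) :
    ((1 ≤ t ∧ t ≤ ((k : ℕ) : ℕ∞)) ∨ (((k : ℕ) + 1 : ℕ∞) ≤ t ∧ t ≤ ((n - 1 : ℕ) : ℕ∞)) ∨
      t = ⊤) ↔ t ≠ 0 ∧ (t = ⊤ ∨ t ≤ ((n - 1 : ℕ) : ℕ∞)) := by
  induction t using ENat.recTopCoe with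
  | top => simp
  | coe t =>
    simp only [ENat.natCast_ne_top, or_false]
    norm_cast
    simp only [false_or]
    have := k.isLt
    omega

end BracketVectors

/-- The join irreducibles of the type `B_n` Tamari lattice are exactly the
`W_{i,t}` with `1 ≤ t ≤ i - 1`, or `i ≤ t ≤ n - 1`, or `t = ∞`; moreover every
element of the lattice is the join of the join irreducibles below it. -/
theorem tamariB_joinIrreducibles (n : ℕ) :
    (∀ r : Fin n → ℕ∞, joinIrredB n r ↔
      ∃ (k : Fin n) (t : ℕ∞),
        ((1 ≤ t ∧ t ≤ ((k : ℕ) : ℕ∞)) ∨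
          (((k : ℕ) + 1 : ℕ∞) ≤ t ∧ t ≤ ((n - 1 : ℕ) : ℕ∞)) ∨
          t = ⊤) ∧
        r = Wvec n k t) ∧
    (∀ r : Fin n → ℕ∞, isBVec n r → ∀ h : Fin n → ℕ∞, isBVec n h →
      (∀ w : Fin n → ℕ∞, joinIrredB n w → w ≤ r → w ≤ h) → r ≤ h) := by
  refine ⟨fun r => ⟨fun hr => ?_, ?_⟩, fun r hr h _ hle => le_of_forall_joinIrredB_le hr hle⟩
  · obtain ⟨k, hk, hrk⟩ := hr.exists_eq_Wvec
    exact ⟨k, r k, (Wvec_params_iff k _).2 ⟨hk, hr.1.1 k⟩, hrk⟩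
  · rintro ⟨k, t, ht, rfl⟩
    obtain ⟨ht0, ht⟩ := (Wvec_params_iff k t).1 ht
    exact Wvec_joinIrredB k ht0 ht
end

section
/- If S ⋖ T is a covering relation in the type B_n Tamari lattice, then the bracket vectors of S and T agree in all but exactly one coordinate. -/
/-! Raise the last coordinate `k` in which `r` and `s` differ to its value in `s`. Every constraint
that could break involves, besides `k`, only coordinates to the right of `k`, where `r` and `s`
agree; so the result is again a bracket vector, strictly between `r` and `s` as soon as they
differ in a second coordinate. -/

section Pi

variable {ι β : Type*} [DecidableEq ι] [PartialOrder β] {r s : ι → β} {k m : ι}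

theorem lt_update_and_update_lt (hrs : r ≤ s) (hk : r k ≠ s k) (hm : r m ≠ s m) (hmk : m ≠ k) :
    r < Function.update r k (s k) ∧ Function.update r k (s k) < s := by
  have hle : ∀ j, Function.update r k (s k) j ≤ s j := fun j => by
    rcases eq_or_ne j k with rfl | hj
    · simp
    · simpa [hj] using hrs j
  refine ⟨Pi.lt_def.2 ⟨fun j => ?_, k, by simpa using (hrs k).lt_of_ne hk⟩,
    Pi.lt_def.2 ⟨hle, m, by simpa [hmk] using (hrs m).lt_of_ne hm⟩⟩
  rcases eq_or_ne j k with rfl | hj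
  · simpa using hrs j
  · simp [hj]

end Pi

theorem exists_ne_and_eqOn_Ioi {ι β : Type*} [Fintype ι] [LinearOrder ι] {r s : ι → β}
    (hrs : r ≠ s) : ∃ k, r k ≠ s k ∧ Set.EqOn r s (Set.Ioi k) := by
  classical
  obtain ⟨j, hj⟩ := Function.ne_iff.1 hrs
  obtain ⟨k, hk, hmax⟩ := (Finset.univ.filter fun i => r i ≠ s i).exists_max_image id ⟨j, by simpa⟩
  refine ⟨k, (Finset.mem_filter.1 hk).2, fun i hi => ?_⟩
  by_contra hne
  exact (Set.mem_Ioi.1 hi).not_ge (hmax i (by simpa))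

section UpdateLastDifference

variable {n : ℕ} {r s : Fin n → ℕ∞} {k : Fin n}

theorem entriesB_update (hr : entriesB n r) (hs : entriesB n s) :
    entriesB n (Function.update r k (s k)) := fun q => by
  rcases eq_or_ne q k with rfl | hq
  · simpa using hs q
  · simpa [hq] using hr q

theorem condIB_update (hr : condIB n r) (hs : condIB n s) (hrs : r ≤ s)
    (habove : Set.EqOn r s (Set.Ioi k)) : condIB n (Function.update r k (s k)) := by
  intro i j hij hd
  rcases eq_or_ne j k with rfl | hj
  · simp only [Function.update_self, Function.update_of_ne hij.ne] at hd ⊢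
    exact (add_le_add (hrs i) le_rfl).trans (hs i j hij hd)
  rcases eq_or_ne i k with rfl | hi
  · simp only [Function.update_self, Function.update_of_ne hj, habove hij] at hd ⊢
    exact hs i j hij hd
  · simp only [Function.update_of_ne hi, Function.update_of_ne hj] at hd ⊢
    exact hr i j hij hd

theorem condIIB_update (hr : condIIB n r) (hs : condIIB n s) (hsk : s k = ⊤ ∨ s k ≤ (n - 1 : ℕ))
    (hrk : r k ≠ ⊤) (habove : Set.EqOn r s (Set.Ioi k)) :
    condIIB n (Function.update r k (s k)) := by
  intro q t hqt ht
  rcases eq_or_ne q k with rfl | hq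
  · rw [Function.update_self] at hqt
    have htn : t ≤ n - 1 := by
      rcases hsk with h | h
      · simp [h] at hqt
      · exact_mod_cast hqt ▸ h
    -- `t < n` puts the index `n + k - t` pointed to by condition (ii) to the right of `k`.
    have hlt : q < ⟨n + q - t, by omega⟩ := Fin.lt_def.2 (by simp only; omega)
    rw [Function.update_of_ne hlt.ne', habove hlt]
    exact hs q t hqt ht
  · rw [Function.update_of_ne hq] at hqt
    have htop := hr q t hqt ht
    have hne : (⟨n + q - t, _⟩ : Fin n) ≠ k := fun h => hrk (h ▸ htop)
    rw [Function.update_of_ne hne]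
    exact htop

theorem isBVec_update (hr : isBVec n r) (hs : isBVec n s) (hrs : r ≤ s) (hrk : r k ≠ ⊤)
    (habove : Set.EqOn r s (Set.Ioi k)) : isBVec n (Function.update r k (s k)) :=
  ⟨entriesB_update hr.1 hs.1, condIB_update hr.2.1 hs.2.1 hrs habove,
    condIIB_update hr.2.2 hs.2.2 (hs.1 k) hrk habove⟩

end UpdateLastDifference

/-- If `S ⋖ T` is a covering relation in the type `B_n` Tamari lattice, then
the bracket vectors of `S` and `T` agree in all but exactly one coordinate. -/
theorem tamariB_cover_one_coordinate (n : ℕ) (r s : Fin n → ℕ∞)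
    (hr : isBVec n r) (hs : isBVec n s) (hlt : r < s)
    (hcov : ∀ c : Fin n → ℕ∞, isBVec n c → ¬(r < c ∧ c < s)) :
    ∃! k : Fin n, r k ≠ s k := by
  obtain ⟨k, hk, habove⟩ := exists_ne_and_eqOn_Ioi hlt.ne
  refine ⟨k, hk, fun m hm => ?_⟩
  by_contra hmk
  have hrk : r k ≠ ⊤ := ((hlt.le k).lt_of_ne hk).ne_top
  exact hcov _ (isBVec_update hr hs hlt.le hrk habove) (lt_update_and_update_lt hlt.le hk hm hmk)
end

section
/- Let S ⊆ {1,...,n} and let T_n^S be the set of type B_n bracket vectors r with r_i ≠ n-1 for all i ∈ S. Then T_n^S is closed under the meet operation of the type B_n Tamari lattice. -/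
/-- `T_n^S`: the set of type `B_n` bracket vectors with `r_i ≠ n - 1` for all
`i ∈ S` (0-based indices) is closed under the meet of the `B_n` Tamari
lattice. -/
theorem TS_closed_under_meet (n : ℕ) (Sset : Set (Fin n))
    (r s : Fin n → ℕ∞) (hr : isBVec n r) (hs : isBVec n s)
    (hrS : ∀ k ∈ Sset, r k ≠ ((n - 1 : ℕ) : ℕ∞))
    (hsS : ∀ k ∈ Sset, s k ≠ ((n - 1 : ℕ) : ℕ∞)) :
    ∀ m : Fin n → ℕ∞, isMeetB n r s m →
      ∀ k ∈ Sset, m k ≠ ((n - 1 : ℕ) : ℕ∞) := by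
  rintro m ⟨⟨hmE, hmI, hmII⟩, hmr, hms, hmax⟩ k hk hmk
  -- Since m k = n-1 ≤ r k and r k ≠ n-1, we get r k = ⊤; similarly s k = ⊤.
  have hrk : r k = ⊤ := by
    rcases hr.1 k with h | h
    · exact h
    · exact absurd (le_antisymm h (hmk ▸ hmr k)) (hrS k hk)
  have hsk : s k = ⊤ := by
    rcases hs.1 k with h | h
    · exact h
    · exact absurd (le_antisymm h (hmk ▸ hms k)) (hsS k hk)
  -- Define h = m with k-th entry ⊤; it is a bracket vector ≤ r, s.
  set h : Fin n → ℕ∞ := fun j => if j = k then ⊤ else m j with hh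
  have hBV : isBVec n h := by
    refine ⟨?_, ?_, ?_⟩
    · intro j
      by_cases hj : j = k
      · left; simp [hh, hj]
      · simpa [hh, hj] using hmE j
    · intro i j hij hd
      by_cases hjk : j = k
      · simp [hh, hjk]
      · have hhj : h j = m j := by simp [hh, hjk]
        rw [hhj] at hd ⊢
        by_cases hik : i = k
        · have h1 := hmI i j hij hd
          have hmj : m j = ⊤ := by
            rcases hmE j with ht | hle
            · exact ht
            · exfalso
              rw [hik, hmk] at h1
              have h2 : ((n - 1 + ((j : ℕ) - (k : ℕ)) : ℕ) : ℕ∞)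
                  ≤ ((n - 1 : ℕ) : ℕ∞) := by
                rw [Nat.cast_add]
                exact le_trans h1 hle
              have h3 := Nat.cast_le.mp h2
              have h4 : (i : ℕ) < (j : ℕ) := hij
              have h5 : (i : ℕ) = (k : ℕ) := by rw [hik]
              omega
          rw [hmj]; exact le_top
        · have : h i = m i := by simp [hh, hik]
          rw [this]
          exact hmI i j hij hd
    · intro k' t ht hle
      by_cases hk' : k' = k
      · exfalso
        rw [hh] at ht
        simp [hk'] at ht
      · have hmk' : m k' = (t : ℕ∞) := by
          rw [hh] at ht; simpa [hk'] using ht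
        have := hmII k' t hmk' hle
        by_cases hidx : (⟨n + (k' : ℕ) - t, by have := k'.isLt; omega⟩ : Fin n) = k
        · simp [hh, hidx]
        · simpa [hh, hidx] using this
  have hhr : h ≤ r := by
    intro j
    by_cases hj : j = k
    · simp [hh, hj, hrk]
    · simpa [hh, hj] using hmr j
  have hhs : h ≤ s := by
    intro j
    by_cases hj : j = k
    · simp [hh, hj, hsk]
    · simpa [hh, hj] using hms j
  have := hmax h hBV hhr hhs k
  rw [hmk] at this
  simp [hh] at this
end

section
/- Every equivalence class of the congruence ~_S on the type B_n Tamari lattice contains exactly one element of T_n^S (the bracket vectors with no entry n-1 in a position from S), and it is the maximum element of its class; consequently the order induced on T_n^S as a quotient of the B_n Tamari lattice coincides with the order induced by inclusion in the B_n Tamari lattice, and is a lattice. -/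
/-- The relation `~_S` on type `B_n` bracket vectors: `V ~ W` iff `V = W` or
they agree in all coordinates except one coordinate `k ∈ S`, where one has the
value `n - 1` and the other has `∞`.  (Here `S` is recorded as a set of
0-based indices `k`, corresponding to `i = k + 1 ∈ {1,…,n}`.) -/
def simBD (n : ℕ) (Sset : Set (Fin n)) (V W : Fin n → ℕ∞) : Prop :=
  V = W ∨ ∃ k ∈ Sset, (∀ j : Fin n, j ≠ k → V j = W j) ∧
    ((V k = ((n - 1 : ℕ) : ℕ∞) ∧ W k = ⊤) ∨ (V k = ⊤ ∧ W k = ((n - 1 : ℕ) : ℕ∞)))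

/-- Membership in `T_n^S`: no coordinate indexed by `S` equals `n - 1`. -/
def inTS (n : ℕ) (Sset : Set (Fin n)) (r : Fin n → ℕ∞) : Prop :=
  ∀ k ∈ Sset, r k ≠ ((n - 1 : ℕ) : ℕ∞)


/-!
At most one entry of a bracket vector equals `n - 1`: by condition (i), an entry `n - 1` at
position `i` forces every later entry `r_j ≥ j - i` to be `∞`. So a `~_S`-class has at most two
elements, and raising an entry `n - 1` in a position of `S` to `∞` yields the maximum of the
class, its only element of `T_n^S`.
This projection is monotone, which identifies the quotient order on `T_n^S` with the induced one.

The componentwise minimum of two bracket vectors satisfies condition (i) but possibly not (ii).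
If `g` satisfies (i) and (ii) fails at `k` with `g k = t`, then every bracket vector below `g`
has entries at most `t - 1 - d` at the positions `k - d` (`d < t`), since equality there would
force, through (ii), the entry of `g` at `n + k - t` to be `∞`. Capping `g` accordingly keeps (i),
so iterating yields the greatest bracket vector below the minimum; its projection is the meet in
`T_n^S`. Joins follow because `T_n^S` is finite, has meets and contains the all-`∞` vector.
-/

theorem Set.Finite.exists_join_of_exists_meet {α : Type*} [PartialOrder α] {P : Set α}
    (hP : P.Finite)
    (hmeet : ∀ a ∈ P, ∀ b ∈ P, ∃ m ∈ P, m ≤ a ∧ m ≤ b ∧ ∀ h ∈ P, h ≤ a → h ≤ b → h ≤ m)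
    {a b : α} (ha : a ∈ P) (hb : b ∈ P) (hub : ∃ u ∈ P, a ≤ u ∧ b ≤ u) :
    ∃ j ∈ P, a ≤ j ∧ b ≤ j ∧ ∀ h ∈ P, a ≤ h → b ≤ h → j ≤ h := by
  obtain ⟨j, ⟨hjP, haj, hbj⟩, hjmin⟩ :=
    (hP.subset (Set.sep_subset P fun u => a ≤ u ∧ b ≤ u)).exists_minimal hub
  refine ⟨j, hjP, haj, hbj, fun h hhP hah hbh => ?_⟩
  obtain ⟨m, hmP, hmj, hmh, hmax⟩ := hmeet j hjP h hhP
  exact (hjmin ⟨hmP, hmax a ha haj hah, hmax b hb hbj hbh⟩ hmj).trans hmh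

section BracketVector

variable {n : ℕ} {V W : Fin n → ℕ∞}

theorem apply_eq_top_of_apply_eq_pred (hE : entriesB n V) (hI : condIB n V) {i j : Fin n}
    (hij : i < j) (hi : V i = ((n - 1 : ℕ) : ℕ∞))
    (hd : (((j : ℕ) - (i : ℕ) : ℕ) : ℕ∞) ≤ V j) : V j = ⊤ := by
  refine (hE j).resolve_right fun hj => ?_
  have hle := (hI i j hij hd).trans hj
  rw [hi, ← Nat.cast_add, Nat.cast_le] at hle
  have : (i : ℕ) < j := hij
  omega

theorem eq_of_apply_eq_pred (hE : entriesB n V) (hI : condIB n V) {i j : Fin n}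
    (hi : V i = ((n - 1 : ℕ) : ℕ∞)) (hj : V j = ((n - 1 : ℕ) : ℕ∞)) : i = j := by
  have key : ∀ {a b : Fin n}, a < b → V a = ((n - 1 : ℕ) : ℕ∞) → V b ≠ ((n - 1 : ℕ) : ℕ∞) := by
    intro a b hab ha hb
    have hd : (((b : ℕ) - (a : ℕ) : ℕ) : ℕ∞) ≤ V b := hb ▸ Nat.cast_le.mpr (by omega)
    exact ENat.natCast_ne_top _ (hb ▸ apply_eq_top_of_apply_eq_pred hE hI hab ha hd)
  rcases lt_trichotomy i j with h | h | h
  · exact (key h hi hj).elim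
  · exact h
  · exact (key h hj hi).elim

theorem isBVec_top : isBVec n ⊤ :=
  ⟨fun _ => Or.inl rfl, fun _ _ _ _ => le_top,
    fun _ t ht _ => (ENat.natCast_ne_top t ht.symm).elim⟩

theorem inTS_top (Sset : Set (Fin n)) : inTS n Sset ⊤ :=
  fun _ _ => (ENat.natCast_ne_top _).symm

theorem finite_setOf_entriesB (n : ℕ) : {r : Fin n → ℕ∞ | entriesB n r}.Finite := by
  refine (Set.Finite.pi fun _ => ((Set.finite_Iic (n - 1)).image ((↑) : ℕ → ℕ∞)).insert ⊤).subset
    fun r hr k _ => ?_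
  rcases hr k with htop | hle
  · exact Or.inl htop
  · obtain ⟨a, ha, han⟩ := ENat.le_natCast_iff.mp hle
    exact Or.inr ⟨a, han, ha.symm⟩

theorem entriesB.inf (hV : entriesB n V) (hW : entriesB n W) : entriesB n (V ⊓ W) := fun k => by
  rcases le_total (V k) (W k) with h | h
  · simpa only [Pi.inf_apply, inf_of_le_left h] using hV k
  · simpa only [Pi.inf_apply, inf_of_le_right h] using hW k

theorem condIB.inf (hV : condIB n V) (hW : condIB n W) : condIB n (V ⊓ W) := by
  intro i j hij hd
  simp only [Pi.inf_apply, le_inf_iff] at hd ⊢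
  exact ⟨(add_le_add inf_le_left le_rfl).trans (hV i j hij hd.1),
    (add_le_add inf_le_right le_rfl).trans (hW i j hij hd.2)⟩

def capVec (k : Fin n) (t : ℕ) : Fin n → ℕ∞ := fun i =>
  if i ≤ k ∧ (k : ℕ) < i + t then (((i : ℕ) + t - (k + 1) : ℕ) : ℕ∞) else ⊤

theorem entriesB_capVec (k : Fin n) {t : ℕ} (ht : t ≤ n) : entriesB n (capVec k t) := by
  intro i
  unfold capVec
  split_ifs with hi
  · have : (i : ℕ) ≤ k := hi.1
    exact Or.inr (Nat.cast_le.mpr (by omega))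
  · exact Or.inl rfl

theorem condIB_capVec (k : Fin n) (t : ℕ) : condIB n (capVec k t) := by
  intro i j hij hd
  have hij' : (i : ℕ) < j := hij
  by_cases hj : j ≤ k ∧ (k : ℕ) < j + t
  · have hjk : (j : ℕ) ≤ k := hj.1
    simp only [capVec, if_pos hj, Nat.cast_le] at hd ⊢
    rw [if_pos ⟨hij.le.trans hj.1, by omega⟩, ← Nat.cast_add, Nat.cast_le]
    omega
  · simp only [capVec, if_neg hj, le_top]

theorem le_capVec {g h : Fin n → ℕ∞} (hI : condIB n g) {k : Fin n} {t : ℕ}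
    (hk : g k = t) (hkt : (k : ℕ) + 1 ≤ t) (idx : Fin n) (hidx : (idx : ℕ) = n + k - t)
    (hviol : g idx ≠ ⊤) (hh : condIIB n h) (hhg : h ≤ g) : h ≤ capVec k t := by
  intro i
  unfold capVec
  split_ifs with hi
  · obtain ⟨hik, hkit⟩ := hi
    have hik' : (i : ℕ) ≤ k := hik
    have hgi : g i + (((k : ℕ) - i : ℕ) : ℕ∞) ≤ t := by
      rcases hik.lt_or_eq with hlt | rfl
      · exact hk ▸ hI i k hlt (hk ▸ Nat.cast_le.mpr (by omega))
      · simp [hk]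
    have hhi := (add_le_add (hhg i) le_rfl).trans hgi
    obtain ⟨a, ha⟩ : ∃ a : ℕ, h i = a :=
      ⟨(h i).toNat, (ENat.natCast_toNat fun htop => by simp [htop] at hhi).symm⟩
    rw [ha, ← Nat.cast_add, Nat.cast_le] at hhi
    have hne : a ≠ i + t - k := by
      rintro rfl
      have hII := hh i _ ha (by omega)
      have hidx' : (⟨n + (i : ℕ) - (i + t - k), by omega⟩ : Fin n) = idx :=
        Fin.ext (by rw [Fin.val_mk, hidx]; omega)
      exact hviol (top_le_iff.mp (hidx' ▸ hII ▸ hhg _))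
    rw [ha, Nat.cast_le]
    omega
  · exact le_top

theorem exists_lt_of_not_condIIB {g : Fin n → ℕ∞} (hE : entriesB n g) (hI : condIB n g)
    (hII : ¬ condIIB n g) :
    ∃ g' < g, entriesB n g' ∧ condIB n g' ∧ ∀ h, isBVec n h → h ≤ g → h ≤ g' := by
  simp only [condIIB, not_forall] at hII
  obtain ⟨k, t, hk, hkt, hviol⟩ := hII
  have htn : t ≤ n := by
    rcases hE k with htop | hle
    · exact (ENat.natCast_ne_top t (hk ▸ htop)).elim
    · have := Nat.cast_le.mp (hk ▸ hle)
      omega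
  refine ⟨g ⊓ capVec k t, inf_le_left.lt_of_ne fun heq => ?_, hE.inf (entriesB_capVec k htn),
    hI.inf (condIB_capVec k t),
    fun h hh hhg => le_inf hhg (le_capVec hI hk hkt _ rfl hviol hh.2.2 hhg)⟩
  have hck : capVec k t k = ((t - 1 : ℕ) : ℕ∞) := by
    rw [capVec, if_pos ⟨le_rfl, by omega⟩]
    congr 1
    omega
  have := (congrFun heq k).symm.trans_le (inf_le_right : (g ⊓ capVec k t) k ≤ capVec k t k)
  rw [hk, hck, Nat.cast_le] at this
  omega

theorem exists_greatest_isBVec_le (g : Fin n → ℕ∞) (hE : entriesB n g) (hI : condIB n g) :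
    ∃ m, isBVec n m ∧ m ≤ g ∧ ∀ h, isBVec n h → h ≤ g → h ≤ m := by
  induction g using WellFoundedLT.induction with
  | _ g ih =>
    by_cases hII : condIIB n g
    · exact ⟨g, ⟨hE, hI, hII⟩, le_rfl, fun _ _ => id⟩
    · obtain ⟨g', hlt, hE', hI', hbelow⟩ := exists_lt_of_not_condIIB hE hI hII
      obtain ⟨m, hm, hmg', hmax⟩ := ih g' hlt hE' hI'
      exact ⟨m, hm, hmg'.trans hlt.le, fun h hh hhg => hmax h hh (hbelow h hh hhg)⟩

variable {Sset : Set (Fin n)}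

open Classical in
noncomputable def projTS (n : ℕ) (Sset : Set (Fin n)) (V : Fin n → ℕ∞) : Fin n → ℕ∞ :=
  fun j => if j ∈ Sset ∧ V j = ((n - 1 : ℕ) : ℕ∞) then ⊤ else V j

theorem projTS_apply_pos {j : Fin n} (h : j ∈ Sset ∧ V j = ((n - 1 : ℕ) : ℕ∞)) :
    projTS n Sset V j = ⊤ :=
  if_pos h

theorem projTS_apply_neg {j : Fin n} (h : ¬ (j ∈ Sset ∧ V j = ((n - 1 : ℕ) : ℕ∞))) :
    projTS n Sset V j = V j :=
  if_neg h

theorem le_projTS (V : Fin n → ℕ∞) : V ≤ projTS n Sset V := fun j => by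
  by_cases h : j ∈ Sset ∧ V j = ((n - 1 : ℕ) : ℕ∞)
  · exact (projTS_apply_pos h).symm ▸ le_top
  · exact (projTS_apply_neg h).ge

theorem inTS_projTS (V : Fin n → ℕ∞) : inTS n Sset (projTS n Sset V) := fun k hk hV => by
  by_cases h : k ∈ Sset ∧ V k = ((n - 1 : ℕ) : ℕ∞)
  · exact ENat.natCast_ne_top _ (hV.symm.trans (projTS_apply_pos h))
  · exact h ⟨hk, (projTS_apply_neg h).symm.trans hV⟩

theorem projTS_eq_self (h : inTS n Sset V) : projTS n Sset V = V :=
  funext fun j => projTS_apply_neg fun hj => h j hj.1 hj.2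

theorem isBVec_projTS (hV : isBVec n V) : isBVec n (projTS n Sset V) := by
  obtain ⟨hE, hI, hII⟩ := hV
  refine ⟨fun k => ?_, fun i j hij hd => ?_, fun k t hk hkt => ?_⟩
  · by_cases h : k ∈ Sset ∧ V k = ((n - 1 : ℕ) : ℕ∞)
    · exact Or.inl (projTS_apply_pos h)
    · exact projTS_apply_neg h ▸ hE k
  · by_cases hj : j ∈ Sset ∧ V j = ((n - 1 : ℕ) : ℕ∞)
    · exact (projTS_apply_pos hj).symm ▸ le_top
    rw [projTS_apply_neg hj] at hd ⊢
    by_cases hi : i ∈ Sset ∧ V i = ((n - 1 : ℕ) : ℕ∞)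
    · rw [apply_eq_top_of_apply_eq_pred hE hI hij hi.2 hd]
      exact le_top
    · exact projTS_apply_neg hi ▸ hI i j hij hd
  · by_cases h : k ∈ Sset ∧ V k = ((n - 1 : ℕ) : ℕ∞)
    · exact (ENat.natCast_ne_top t (hk.symm.trans (projTS_apply_pos h))).elim
    · rw [projTS_apply_neg h] at hk
      exact top_le_iff.mp ((hII k t hk hkt).symm.trans_le (le_projTS V _))

theorem simBD.symm (h : simBD n Sset V W) : simBD n Sset W V := by
  rcases h with rfl | ⟨k, hk, hagree, hflip⟩
  · exact Or.inl rfl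
  · exact Or.inr ⟨k, hk, fun j hj => (hagree j hj).symm, hflip.symm.imp And.symm And.symm⟩

theorem simBD_projTS (hE : entriesB n V) (hI : condIB n V) :
    simBD n Sset V (projTS n Sset V) := by
  by_cases hex : ∃ k, k ∈ Sset ∧ V k = ((n - 1 : ℕ) : ℕ∞)
  · obtain ⟨k, hk⟩ := hex
    refine Or.inr ⟨k, hk.1, fun j hjk => ?_, Or.inl ⟨hk.2, projTS_apply_pos hk⟩⟩
    exact (projTS_apply_neg fun hj => hjk (eq_of_apply_eq_pred hE hI hj.2 hk.2)).symm
  · exact Or.inl (funext fun j => (projTS_apply_neg fun hj => hex ⟨j, hj⟩).symm)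

theorem le_projTS_of_simBD (h : simBD n Sset V W) : W ≤ projTS n Sset V := by
  rcases h with rfl | ⟨k, hkS, hagree, hflip⟩
  · exact le_projTS _
  intro j
  rcases eq_or_ne j k with rfl | hjk
  · rcases hflip with ⟨hV, -⟩ | ⟨hV, -⟩
    · exact (projTS_apply_pos ⟨hkS, hV⟩).symm ▸ le_top
    · exact (le_top.trans_eq hV.symm).trans (le_projTS V j)
  · exact (hagree j hjk).symm ▸ le_projTS V j

theorem projTS_mono (hW : entriesB n W) (h : V ≤ W) : projTS n Sset V ≤ projTS n Sset W := by
  intro j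
  by_cases hj : j ∈ Sset ∧ V j = ((n - 1 : ℕ) : ℕ∞)
  · rw [projTS_apply_pos hj]
    rcases hW j with htop | hle
    · exact (le_projTS W j).trans' htop.ge
    · exact (projTS_apply_pos ⟨hj.1, hle.antisymm (hj.2 ▸ h j)⟩).ge
  · exact projTS_apply_neg hj ▸ (h j).trans (le_projTS W j)

theorem exists_meet_TS (hV : isBVec n V) (hW : isBVec n W) (hVS : inTS n Sset V)
    (hWS : inTS n Sset W) :
    ∃ m, isBVec n m ∧ inTS n Sset m ∧ m ≤ V ∧ m ≤ W ∧
      ∀ h, isBVec n h → h ≤ V → h ≤ W → h ≤ m := by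
  obtain ⟨m, hm, hmle, hmax⟩ :=
    exists_greatest_isBVec_le (V ⊓ W) (hV.1.inf hW.1) (hV.2.1.inf hW.2.1)
  refine ⟨projTS n Sset m, isBVec_projTS hm, inTS_projTS m, ?_, ?_,
    fun h hh hhV hhW => (hmax h hh (le_inf hhV hhW)).trans (le_projTS m)⟩
  · exact (projTS_mono hV.1 (hmle.trans inf_le_left)).trans_eq (projTS_eq_self hVS)
  · exact (projTS_mono hW.1 (hmle.trans inf_le_right)).trans_eq (projTS_eq_self hWS)

end BracketVector

/-- Every equivalence class of the congruence `~_S` on the type `B_n` Tamari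
lattice contains exactly one element of `T_n^S`, which is the maximum of its
class; consequently, for elements of `T_n^S`, the quotient order (some
representatives are comparable) coincides with the order induced by inclusion,
and `T_n^S` is a lattice with respect to this order. -/
theorem TS_quotient_lattice (n : ℕ) (Sset : Set (Fin n)) :
    (∀ V : Fin n → ℕ∞, isBVec n V →
      ∃! W : Fin n → ℕ∞, isBVec n W ∧ simBD n Sset V W ∧ inTS n Sset W ∧
        ∀ U : Fin n → ℕ∞, isBVec n U → simBD n Sset V U → U ≤ W) ∧
    (∀ V W : Fin n → ℕ∞, isBVec n V → isBVec n W →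
      inTS n Sset V → inTS n Sset W →
      (V ≤ W ↔ ∃ V' W' : Fin n → ℕ∞, isBVec n V' ∧ isBVec n W' ∧
        simBD n Sset V V' ∧ simBD n Sset W W' ∧ V' ≤ W')) ∧
    (∀ V W : Fin n → ℕ∞, isBVec n V → isBVec n W →
      inTS n Sset V → inTS n Sset W →
      (∃ m : Fin n → ℕ∞, isBVec n m ∧ inTS n Sset m ∧ m ≤ V ∧ m ≤ W ∧
        ∀ h : Fin n → ℕ∞, isBVec n h → inTS n Sset h → h ≤ V → h ≤ W → h ≤ m) ∧
      (∃ j : Fin n → ℕ∞, isBVec n j ∧ inTS n Sset j ∧ V ≤ j ∧ W ≤ j ∧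
        ∀ h : Fin n → ℕ∞, isBVec n h → inTS n Sset h → V ≤ h → W ≤ h → j ≤ h)) := by
  refine ⟨fun V hV => ?_, fun V W hV hW hVS hWS => ?_, fun V W hV hW hVS hWS => ?_⟩
  · have hsim := simBD_projTS (Sset := Sset) hV.1 hV.2.1
    refine ⟨projTS n Sset V, ⟨isBVec_projTS hV, hsim, inTS_projTS V,
      fun _ _ => le_projTS_of_simBD⟩, fun U ⟨_, hsU, _, hUmax⟩ => ?_⟩
    exact (le_projTS_of_simBD hsU).antisymm (hUmax _ (isBVec_projTS hV) hsim)
  · refine ⟨fun h => ⟨V, W, hV, hW, Or.inl rfl, Or.inl rfl, h⟩, ?_⟩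
    rintro ⟨V', W', -, -, hsV, hsW, hle⟩
    have hW'W : W' ≤ W := (le_projTS_of_simBD hsW).trans_eq (projTS_eq_self hWS)
    calc V ≤ projTS n Sset V' := le_projTS_of_simBD hsV.symm
      _ ≤ projTS n Sset W := projTS_mono hW.1 (hle.trans hW'W)
      _ = W := projTS_eq_self hWS
  · let P : Set (Fin n → ℕ∞) := {r | isBVec n r ∧ inTS n Sset r}
    have hmeet : ∀ a ∈ P, ∀ b ∈ P, ∃ m ∈ P, m ≤ a ∧ m ≤ b ∧ ∀ h ∈ P, h ≤ a → h ≤ b → h ≤ m := by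
      rintro a ⟨ha, haS⟩ b ⟨hb, hbS⟩
      obtain ⟨m, hm, hmS, hma, hmb, hmax⟩ := exists_meet_TS ha hb haS hbS
      exact ⟨m, ⟨hm, hmS⟩, hma, hmb, fun h hh => hmax h hh.1⟩
    have hPfin : P.Finite := (finite_setOf_entriesB n).subset fun r hr => hr.1.1
    obtain ⟨m, ⟨hm, hmS⟩, hmV, hmW, hmax⟩ := hmeet V ⟨hV, hVS⟩ W ⟨hW, hWS⟩
    obtain ⟨j, ⟨hj, hjS⟩, hVj, hWj, hmin⟩ := hPfin.exists_join_of_exists_meet hmeet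
      ⟨hV, hVS⟩ ⟨hW, hWS⟩ ⟨⊤, ⟨isBVec_top, inTS_top Sset⟩, le_top, le_top⟩
    exact ⟨⟨m, hm, hmS, hmV, hmW, fun h hh hhS => hmax h ⟨hh, hhS⟩⟩,
      ⟨j, hj, hjS, hVj, hWj, fun h hh hhS => hmin h ⟨hh, hhS⟩⟩⟩
end

section
/- Let Y < Z in the type B_n Tamari lattice, and consider maximal chains Y = T_0 ⋖ T_1 ⋖ ... ⋖ T_r = Z. Label each covering edge by the pair (k, value) where k is the unique coordinate in which the bracket vectors differ. Then there is at most one maximal chain from Y to Z in which the coordinate labels k_0, k_1, ..., k_{r-1} are strictly decreasing. -/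
/-- `a ⋖ b` within the type `B_n` Tamari lattice of bracket vectors. -/
def covB (n : ℕ) (a b : Fin n → ℕ∞) : Prop :=
  a < b ∧ ∀ c : Fin n → ℕ∞, isBVec n c → ¬(a < c ∧ c < b)

/-!
A covering relation of the type `B_n` Tamari lattice changes a single coordinate: if `a < b`
differ in two coordinates and `m` is the smallest of them, then lowering `b` to `a` in
coordinate `m` alone gives a bracket vector strictly between them. In a chain whose changed
coordinates decrease, the coordinate `k` changed by the first step is never touched again, and
every coordinate in which the endpoints differ is changed by some step, hence is at most `k`.
So the first step sets the largest coordinate in which `Y` and `Z` differ to its value in `Z`;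
it is determined by `Y` and `Z`, and induction on the length of the chain finishes the proof.
-/

theorem lt_of_entriesB {n : ℕ} {r : Fin n → ℕ∞} (h : entriesB n r) {k : Fin n} {t : ℕ}
    (hk : r k = t) : t < n := by
  have := k.isLt
  rcases h k with h | h
  · simp [hk] at h
  · rw [hk] at h
    have : t ≤ n - 1 := by exact_mod_cast h
    omega

theorem isBVec_update_of_le {n : ℕ} {a b : Fin n → ℕ∞} (ha : isBVec n a) (hb : isBVec n b)
    (hab : a ≤ b) {k : Fin n} (hbelow : ∀ j < k, a j = b j) :
    isBVec n (Function.update b k (a k)) := by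
  obtain ⟨hae, haI, haII⟩ := ha
  obtain ⟨hbe, hbI, hbII⟩ := hb
  set c := Function.update b k (a k)
  have hcb : c ≤ b := update_le_self_iff.2 (hab k)
  have hce : entriesB n c := by
    intro m
    rcases eq_or_ne m k with rfl | hm
    · simpa [c] using hae m
    · simpa [c, hm] using hbe m
  refine ⟨hce, fun i j hij hle => ?_, fun m t hmt ht => ?_⟩
  · rcases eq_or_ne j k with rfl | hjk
    · simp only [c, Function.update_self, Function.update_of_ne hij.ne, ← hbelow i hij] at hle ⊢
      exact haI i j hij hle
    · simp only [c, Function.update_of_ne hjk] at hle ⊢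
      exact (add_le_add_left (hcb i) _).trans (hbI i j hij hle)
  · have htn := lt_of_entriesB hce hmt
    set p : Fin n := ⟨n + m - t, by omega⟩
    have hmp : m < p := by simp only [p, Fin.lt_def]; omega
    rcases eq_or_ne p k with hpk | hpk
    · -- `a` and `b` agree at `m < k`, so condition (ii) for `a` already forces `a k = ⊤`.
      have hmk : m < k := hpk ▸ hmp
      have ham : a m = t := by simpa [c, hmk.ne, hbelow m hmk] using hmt
      simpa [c, ← hpk] using haII m t ham ht
    · simp only [c, Function.update_of_ne hpk]
      rcases eq_or_ne m k with rfl | hmk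
      · exact top_le_iff.1 (haII m t (by simpa [c] using hmt) ht ▸ hab p)
      · exact hbII m t (by simpa [c, hmk] using hmt) ht

theorem exists_isBVec_between {n : ℕ} {a b : Fin n → ℕ∞} (ha : isBVec n a) (hb : isBVec n b)
    (hab : a ≤ b) {j k : Fin n} (hj : a j ≠ b j) (hk : a k ≠ b k) (hjk : j ≠ k) :
    ∃ c, isBVec n c ∧ a < c ∧ c < b := by
  obtain ⟨m, hm, hmin⟩ := wellFounded_lt.has_min {i | a i ≠ b i} ⟨j, hj⟩
  have hbelow : ∀ i < m, a i = b i := fun i hi => not_not.1 fun h => hmin i h hi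
  obtain ⟨l, hl, hlm⟩ : ∃ l, a l ≠ b l ∧ l ≠ m :=
    if h : j = m then ⟨k, hk, h ▸ hjk.symm⟩ else ⟨j, hj, h⟩
  refine ⟨Function.update b m (a m), isBVec_update_of_le ha hb hab hbelow, ?_, ?_⟩
  · refine lt_of_le_of_ne (le_update_iff.2 ⟨le_rfl, fun i _ => hab i⟩) fun h => hl ?_
    simpa [hlm] using congrFun h l
  · refine lt_of_le_of_ne (update_le_self_iff.2 (hab m)) fun h => hm ?_
    simpa using congrFun h m

theorem covB.eq_of_ne_of_ne {n : ℕ} {a b : Fin n → ℕ∞} (h : covB n a b) (ha : isBVec n a)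
    (hb : isBVec n b) {j k : Fin n} (hj : a j ≠ b j) (hk : a k ≠ b k) : j = k := by
  by_contra hjk
  obtain ⟨c, hc, hac, hcb⟩ := exists_isBVec_between ha hb h.1.le hj hk hjk
  exact h.2 c hc ⟨hac, hcb⟩

theorem exists_ne_succ_of_ne {α : Sort*} {f : ℕ → α} {i j : ℕ} (hij : i ≤ j) (h : f i ≠ f j) :
    ∃ l, i ≤ l ∧ l < j ∧ f l ≠ f (l + 1) := by
  induction j, hij using Nat.le_induction with
  | base => exact absurd rfl h
  | succ j hij ih =>
    by_cases hj : f j = f (j + 1)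
    · obtain ⟨l, hil, hlj, hl⟩ := ih (hj ▸ h)
      exact ⟨l, hil, by omega, hl⟩
    · exact ⟨j, hij, by omega, hj⟩

def IsDecreasingCoverChain (n : ℕ) (T : ℕ → Fin n → ℕ∞) (r : ℕ) : Prop :=
  (∀ i ≤ r, isBVec n (T i)) ∧ (∀ i < r, covB n (T i) (T (i + 1))) ∧
    ∀ i, i + 1 < r → ∀ k k' : Fin n, T i k ≠ T (i + 1) k → T (i + 1) k' ≠ T (i + 2) k' → k' < k

namespace IsDecreasingCoverChain

variable {n r : ℕ} {T : ℕ → Fin n → ℕ∞}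

theorem tail (h : IsDecreasingCoverChain n T (r + 1)) :
    IsDecreasingCoverChain n (fun i => T (i + 1)) r :=
  ⟨fun i _ => h.1 (i + 1) (by omega), fun i _ => h.2.1 (i + 1) (by omega),
    fun i _ => h.2.2 (i + 1) (by omega)⟩

theorem eq_zero_of_eq (h : IsDecreasingCoverChain n T r) (hr : T r = T 0) : r = 0 := by
  by_contra hr0
  have hmono : StrictMonoOn T (Set.Iic r) :=
    strictMonoOn_Iic_of_lt_succ fun i hi => by simpa using (h.2.1 i hi).1
  exact (hmono (Set.mem_Iic.2 (Nat.zero_le r)) (Set.mem_Iic.2 le_rfl) (Nat.pos_of_ne_zero hr0)).ne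
    hr.symm

theorem exists_ne (h : IsDecreasingCoverChain n T r) {i : ℕ} (hi : i < r) :
    ∃ k, T i k ≠ T (i + 1) k :=
  Function.ne_iff.1 (h.2.1 i hi).1.ne

theorem eq_of_ne_of_ne (h : IsDecreasingCoverChain n T r) {i : ℕ} (hi : i < r) {j k : Fin n}
    (hj : T i j ≠ T (i + 1) j) (hk : T i k ≠ T (i + 1) k) : j = k :=
  (h.2.1 i hi).eq_of_ne_of_ne (h.1 i hi.le) (h.1 (i + 1) hi) hj hk

theorem lt_of_lt (h : IsDecreasingCoverChain n T r) {i j : ℕ} (hij : i < j) (hj : j < r)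
    {k k' : Fin n} (hk : T i k ≠ T (i + 1) k) (hk' : T j k' ≠ T (j + 1) k') : k' < k := by
  induction j, hij using Nat.le_induction generalizing k' with
  | base => exact h.2.2 i hj k k' hk hk'
  | succ j hij ih =>
    obtain ⟨k'', hk''⟩ := h.exists_ne (by omega : j < r)
    exact (h.2.2 j hj k'' k' hk'' hk').trans (ih (by omega) hk'')

theorem one_eq_update (h : IsDecreasingCoverChain n T r) (hr : 0 < r) :
    ∃ k, T 0 k ≠ T r k ∧ (∀ j, T 0 j ≠ T r j → j ≤ k) ∧
      T 1 = Function.update (T 0) k (T r k) := by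
  obtain ⟨k, hk⟩ := h.exists_ne hr
  have hlast : T 1 k = T r k := by
    by_contra hne
    obtain ⟨l, hl1, hlr, hl⟩ := exists_ne_succ_of_ne (f := fun i => T i k) hr hne
    exact (h.lt_of_lt hl1 hlr hk hl).false
  refine ⟨k, hlast ▸ hk, fun j hj => ?_, ?_⟩
  · obtain ⟨l, -, hlr, hl⟩ := exists_ne_succ_of_ne (f := fun i => T i j) (Nat.zero_le r) hj
    rcases Nat.eq_zero_or_pos l with rfl | hl0
    · exact (h.eq_of_ne_of_ne hr hl hk).le
    · exact (h.lt_of_lt hl0 hlr hk hl).le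
  · funext j
    rcases eq_or_ne j k with rfl | hjk
    · simp [hlast]
    · rw [Function.update_of_ne hjk]
      exact (not_not.1 fun hj => hjk (h.eq_of_ne_of_ne hr hj hk)).symm

theorem unique (h : IsDecreasingCoverChain n T r) {r' : ℕ} {T' : ℕ → Fin n → ℕ∞}
    (h' : IsDecreasingCoverChain n T' r') (h0 : T 0 = T' 0) (hr : T r = T' r') :
    r = r' ∧ ∀ i ≤ r, T i = T' i := by
  induction r generalizing r' T T' with
  | zero =>
    obtain rfl : r' = 0 := h'.eq_zero_of_eq (hr.symm.trans h0)
    exact ⟨rfl, fun i hi => Nat.le_zero.1 hi ▸ h0⟩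
  | succ r ih =>
    obtain _ | r' := r'
    · exact absurd (h.eq_zero_of_eq (hr.trans h0.symm)) r.succ_ne_zero
    obtain ⟨k, hk, hkmax, h1⟩ := h.one_eq_update r.succ_pos
    obtain ⟨k', hk', hkmax', h1'⟩ := h'.one_eq_update r'.succ_pos
    rw [h0, hr] at hk hkmax h1
    have hT1 : T 1 = T' 1 := by
      rw [h1, h1', le_antisymm (hkmax' k hk) (hkmax k' hk')]
    obtain ⟨rfl, htail⟩ := ih h.tail h'.tail hT1 hr
    refine ⟨rfl, fun i hi => ?_⟩
    cases i with
    | zero => exact h0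
    | succ i => exact htail i (by omega)

end IsDecreasingCoverChain

theorem tamariB_unique_decreasing_chain_general (n : ℕ) (Y Z : Fin n → ℕ∞)
    (r r' : ℕ) (T T' : ℕ → Fin n → ℕ∞)
    (hT0 : T 0 = Y) (hTr : T r = Z) (hTbv : ∀ i ≤ r, isBVec n (T i))
    (hTcov : ∀ i < r, covB n (T i) (T (i + 1)))
    (hTdec : ∀ i, i + 1 < r → ∀ k k' : Fin n,
      T i k ≠ T (i + 1) k → T (i + 1) k' ≠ T (i + 2) k' → k' < k)
    (hT0' : T' 0 = Y) (hTr' : T' r' = Z) (hTbv' : ∀ i ≤ r', isBVec n (T' i))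
    (hTcov' : ∀ i < r', covB n (T' i) (T' (i + 1)))
    (hTdec' : ∀ i, i + 1 < r' → ∀ k k' : Fin n,
      T' i k ≠ T' (i + 1) k → T' (i + 1) k' ≠ T' (i + 2) k' → k' < k) :
    r = r' ∧ ∀ i ≤ r, T i = T' i :=
  IsDecreasingCoverChain.unique ⟨hTbv, hTcov, hTdec⟩ ⟨hTbv', hTcov', hTdec'⟩
    (hT0.trans hT0'.symm) (hTr.trans hTr'.symm)

/-- For `Y < Z` in the type `B_n` Tamari lattice there is at most one maximal
chain `Y = T_0 ⋖ T_1 ⋖ ⋯ ⋖ T_r = Z` in which the coordinates where successive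
bracket vectors differ are strictly decreasing. -/
theorem tamariB_unique_decreasing_chain (n : ℕ) (Y Z : Fin n → ℕ∞)
    (hY : isBVec n Y) (hZ : isBVec n Z) (hYZ : Y < Z)
    (r r' : ℕ) (T T' : ℕ → Fin n → ℕ∞)
    (hT0 : T 0 = Y) (hTr : T r = Z) (hTbv : ∀ i ≤ r, isBVec n (T i))
    (hTcov : ∀ i < r, covB n (T i) (T (i + 1)))
    (hTdec : ∀ i, i + 1 < r → ∀ k k' : Fin n,
      T i k ≠ T (i + 1) k → T (i + 1) k' ≠ T (i + 2) k' → k' < k)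
    (hT0' : T' 0 = Y) (hTr' : T' r' = Z) (hTbv' : ∀ i ≤ r', isBVec n (T' i))
    (hTcov' : ∀ i < r', covB n (T' i) (T' (i + 1)))
    (hTdec' : ∀ i, i + 1 < r' → ∀ k k' : Fin n,
      T' i k ≠ T' (i + 1) k → T' (i + 1) k' ≠ T' (i + 2) k' → k' < k) :
    r = r' ∧ ∀ i ≤ r, T i = T' i :=
  tamariB_unique_decreasing_chain_general n Y Z r r' T T' hT0 hTr hTbv hTcov hTdec hT0' hTr' hTbv'
    hTcov' hTdec'
end
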